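/- arXiv:0803.2068 — 3 statements merged into one kernel-verified Lean document; each statement's English description precedes it below -/
import Mathlib

section
/- With X, U, and the reciprocating function r as above: almost surely on the event {X ≠ 0}, r(X,U) ≠ 0 and r(X,U) belongs to the support of the distribution of X. In particular P(X ≠ 0 and r(X,U) = 0) = 0, while r(X,U) = 0 on {X = 0}. -/
open MeasureTheory ProbabilityTheory Set Function

noncomputable section

/-- Truncated first-moment function `G`. -/
def G (μ : Measure ℝ) (x : ℝ) : ℝ :=
  if 0 ≤ x then ∫ z in Set.Ioc (0:ℝ) x, z ∂μ else ∫ z in Set.Ico x 0, -z ∂μ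

/-- `m = E X⁺`. -/
def mTot (μ : Measure ℝ) : ℝ := ∫ z in Set.Ioi (0:ℝ), z ∂μ

/-- Extension of `G` to `[-∞,∞]`. -/
def Gbar (μ : Measure ℝ) (x : EReal) : ℝ :=
  if x = ⊤ then ∫ z in Set.Ioi (0:ℝ), z ∂μ
  else if x = ⊥ then ∫ z in Set.Iio (0:ℝ), -z ∂μ
  else G μ x.toReal

/-- Positive generalized inverse `x₊`. -/
def xPlus (μ : Measure ℝ) (h : ℝ) : EReal := sInf {x : EReal | 0 ≤ x ∧ Gbar μ x ≥ h}

/-- Negative generalized inverse `x₋`. -/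
def xMinus (μ : Measure ℝ) (h : ℝ) : EReal := sSup {x : EReal | x ≤ 0 ∧ Gbar μ x ≥ h}

/-- Randomized version `G̃` of `G`. -/
def Gtilde (μ : Measure ℝ) (x u : ℝ) : ℝ :=
  if 0 ≤ x then Function.leftLim (G μ) x + (G μ x - Function.leftLim (G μ) x) * u
  else Function.rightLim (G μ) x + (G μ x - Function.rightLim (G μ) x) * u

/-- The reciprocating function `r`. -/
def recip (μ : Measure ℝ) (x u : ℝ) : EReal :=
  if 0 ≤ x then xMinus μ (Gtilde μ x u) else xPlus μ (Gtilde μ x u)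

/-- The regularizing function `x̂`. -/
def xhat (μ : Measure ℝ) (x u : ℝ) : EReal :=
  if 0 ≤ x then xPlus μ (Gtilde μ x u) else xMinus μ (Gtilde μ x u)

/-- Support of a measure on ℝ. -/
def measSupport (μ : Measure ℝ) : Set ℝ :=
  {y : ℝ | ∀ O : Set ℝ, IsOpen O → y ∈ O → 0 < μ O}

/-- `E g(X_{a,b}, R_{a,b})` for the zero-mean distribution on `{a,b}` (with `a*b ≤ 0`). -/
def twoE (g : ℝ → ℝ → ℝ) (a b : ℝ) : ℝ :=
  if a * b < 0 then (b / (b - a)) * g a b + (a / (a - b)) * g b a else g 0 0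

/-- `E g(X_{a,b})` for the zero-mean distribution on `{a,b}` (with `a*b ≤ 0`). -/
def oneE (g : ℝ → ℝ) (a b : ℝ) : ℝ :=
  if a * b < 0 then (b / (b - a)) * g a + (a / (a - b)) * g b else g 0

open Filter Topology


lemma tendsto_setIntegral_seq (μ : Measure ℝ) (f : ℝ → ℝ) (hf : Integrable f μ)
    (s : ℕ → Set ℝ) (t : Set ℝ) (hms : ∀ n, MeasurableSet (s n)) (hmt : MeasurableSet t)
    (hconv : ∀ z : ℝ, ∀ᶠ n in atTop, (z ∈ s n ↔ z ∈ t)) :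
    Tendsto (fun n => ∫ z in s n, f z ∂μ) atTop (𝓝 (∫ z in t, f z ∂μ)) := by
  have hind : ∀ n, ∫ z in s n, f z ∂μ = ∫ z, (s n).indicator f z ∂μ := fun n =>
    (integral_indicator (hms n)).symm
  have hindt : ∫ z in t, f z ∂μ = ∫ z, t.indicator f z ∂μ := (integral_indicator hmt).symm
  simp only [hind, hindt]
  refine tendsto_integral_of_dominated_convergence (fun z => ‖f z‖)
    (fun n => hf.aestronglyMeasurable.indicator (hms n)) hf.norm ?_ ?_
  · exact fun n => Filter.Eventually.of_forall fun z => norm_indicator_le_norm_self f z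
  · refine Filter.Eventually.of_forall fun z => ?_
    refine Filter.Tendsto.congr' ?_ tendsto_const_nhds
    filter_upwards [hconv z] with n hn
    by_cases hz : z ∈ t
    · rw [Set.indicator_of_mem hz, Set.indicator_of_mem (hn.mpr hz)]
    · rw [Set.indicator_of_notMem hz, Set.indicator_of_notMem (fun h => hz (hn.mp h))]

lemma Gbar_coe (μ : Measure ℝ) (t : ℝ) : Gbar μ (t : EReal) = G μ t := by
  rw [Gbar, if_neg (EReal.coe_ne_top t), if_neg (EReal.coe_ne_bot t), EReal.toReal_coe]

lemma G_nonpos (μ : Measure ℝ) {t : ℝ} (ht : t ≤ 0) :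
    G μ t = ∫ z in Set.Ico t 0, -z ∂μ := by
  rcases eq_or_lt_of_le ht with rfl | ht'
  · simp [G]
  · rw [G, if_neg (not_le.mpr ht')]

lemma G_nonneg_eq (μ : Measure ℝ) {t : ℝ} (ht : 0 ≤ t) :
    G μ t = ∫ z in Set.Ioc (0:ℝ) t, z ∂μ := by rw [G, if_pos ht]

lemma natcast_eventually (c : ℝ) : ∀ᶠ n : ℕ in atTop, c ≤ (n : ℝ) :=
  (tendsto_natCast_atTop_atTop (R := ℝ)).eventually_ge_atTop c

lemma oneover_tendsto : Tendsto (fun n : ℕ => 1 / ((n:ℝ)+1)) atTop (𝓝 0) :=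
  tendsto_one_div_add_atTop_nhds_zero_nat

lemma key_neg (μ : Measure ℝ) (hf : Integrable (fun z : ℝ => z) μ) {h : ℝ}
    (h0 : 0 < h) (hm : h < ∫ z in Set.Iio (0:ℝ), -z ∂μ) :
    ∃ y : ℝ, xMinus μ h = (y : EReal) ∧ y < 0 ∧ y ∈ measSupport μ := by
  classical
  set N : ℝ → ℝ := fun t => ∫ z in Set.Ico t 0, -z ∂μ with hNdef
  have hfneg : Integrable (fun z : ℝ => -z) μ := hf.neg
  have hnonneg : ∀ s : Set ℝ, s ⊆ Iio 0 → MeasurableSet s →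
      (0 : ℝ → ℝ) ≤ᵐ[μ.restrict s] fun z => -z := by
    intro s hs hsm
    refine (ae_restrict_iff' hsm).mpr (Filter.Eventually.of_forall fun z hz => ?_)
    have := hs hz
    simp only [Pi.zero_apply]
    simp only [mem_Iio] at this
    linarith
  have hanti : ∀ s t : ℝ, s ≤ t → N t ≤ N s := by
    intro s t hst
    refine setIntegral_mono_set hfneg.integrableOn
      (hnonneg _ Ico_subset_Iio_self measurableSet_Ico)
      (HasSubset.Subset.eventuallyLE (Ico_subset_Ico_left hst))
  have hGbar : ∀ t : ℝ, t ≤ 0 → Gbar μ (t : EReal) = N t := by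
    intro t ht; rw [Gbar_coe, G_nonpos μ ht]
  set S : Set EReal := {x : EReal | x ≤ 0 ∧ Gbar μ x ≥ h} with hSdef
  -- a member far to the left
  have hmemA : ∃ a : ℝ, a ≤ 0 ∧ h < N a := by
    have htend : Tendsto (fun n : ℕ => N (-(n:ℝ))) atTop (𝓝 (∫ z in Set.Iio (0:ℝ), -z ∂μ)) := by
      refine tendsto_setIntegral_seq μ _ hfneg _ _ (fun n => measurableSet_Ico)
        measurableSet_Iio ?_
      intro z
      by_cases hz : z < 0
      · filter_upwards [natcast_eventually (-z)] with n hn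
        simp only [mem_Ico, mem_Iio]
        constructor
        · intro; exact hz
        · intro; exact ⟨by linarith, hz⟩
      · filter_upwards with n
        simp only [mem_Ico, mem_Iio]
        exact ⟨fun h' => h'.2, fun h' => absurd h' hz⟩
    obtain ⟨n, hn⟩ := (htend.eventually (eventually_gt_nhds hm)).exists
    exact ⟨-(n:ℝ), neg_nonpos.mpr (Nat.cast_nonneg n), hn⟩
  obtain ⟨a, ha0, haN⟩ := hmemA
  have hSa : (a : EReal) ∈ S := by
    refine ⟨by exact_mod_cast ha0, ?_⟩
    rw [hGbar a ha0]; exact haN.le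
  -- a bound away from zero
  have hmemD : ∃ δ : ℝ, δ < 0 ∧ N δ < h := by
    have htend : Tendsto (fun n : ℕ => N (-(1 / ((n:ℝ)+1)))) atTop (𝓝 (∫ z in (∅ : Set ℝ), -z ∂μ)) := by
      refine tendsto_setIntegral_seq μ _ hfneg _ _ (fun n => measurableSet_Ico)
        MeasurableSet.empty ?_
      intro z
      by_cases hz : z < 0
      · have : ∀ᶠ n : ℕ in atTop, z < -(1 / ((n:ℝ)+1)) := by
          have h2 : Tendsto (fun n : ℕ => -(1 / ((n:ℝ)+1))) atTop (𝓝 (-0)) := oneover_tendsto.neg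
          rw [neg_zero] at h2
          exact h2.eventually (eventually_gt_nhds hz)
        filter_upwards [this] with n hn
        simp only [mem_Ico, mem_empty_iff_false, iff_false, not_and, not_lt]
        intro hle; linarith
      · filter_upwards with n
        simp only [mem_Ico, mem_empty_iff_false, iff_false, not_and, not_lt]
        intro _; linarith [not_lt.mp hz]
    rw [setIntegral_empty] at htend
    obtain ⟨n, hn⟩ := (htend.eventually (eventually_lt_nhds h0)).exists
    refine ⟨-(1 / ((n:ℝ)+1)), neg_neg_iff_pos.mpr (by positivity), hn⟩
  obtain ⟨δ, hδ0, hδN⟩ := hmemD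
  have hSle : ∀ x ∈ S, x ≤ (δ : EReal) := by
    intro x hx
    by_contra hcon
    push_neg at hcon
    have hxne_bot : x ≠ ⊥ := ne_of_gt ((EReal.bot_lt_coe δ).trans hcon)
    have hxne_top : x ≠ ⊤ := by
      intro hxt
      rw [hxt] at hx
      exact absurd hx.1 (by simp)
    lift x to ℝ using ⟨hxne_top, hxne_bot⟩
    have hx0 : x ≤ 0 := by exact_mod_cast hx.1
    have hδx : δ ≤ x := by exact_mod_cast hcon.le
    have hx2 : h ≤ N x := by rw [← hGbar x hx0]; exact hx.2
    linarith [hanti δ x hδx]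
  set y' : EReal := sSup S with hy'def
  have hy'a : (a : EReal) ≤ y' := le_sSup hSa
  have hy'δ : y' ≤ (δ : EReal) := sSup_le hSle
  have hy'ne_bot : y' ≠ ⊥ := ne_of_gt (lt_of_lt_of_le (EReal.bot_lt_coe a) hy'a)
  have hy'ne_top : y' ≠ ⊤ := ne_of_lt (lt_of_le_of_lt hy'δ (EReal.coe_lt_top δ))
  set y : ℝ := y'.toReal with hydef
  have hyeq : (y : EReal) = y' := EReal.coe_toReal hy'ne_top hy'ne_bot
  have hyδ : y ≤ δ := by exact_mod_cast hyeq ▸ hy'δ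
  have hy0 : y < 0 := lt_of_le_of_lt hyδ hδ0
  -- left continuity at y yields N y ≥ h
  have hbelow : ∀ t : ℝ, t < y → h ≤ N t := by
    intro t ht
    have : (t : EReal) < y' := by rw [← hyeq]; exact_mod_cast ht
    obtain ⟨b, hbS, htb⟩ := lt_sSup_iff.mp this
    have hbne_bot : b ≠ ⊥ := ne_of_gt ((EReal.bot_lt_coe t).trans htb)
    have hbne_top : b ≠ ⊤ := by
      intro hbt; rw [hbt] at hbS; exact absurd hbS.1 (by simp)
    lift b to ℝ using ⟨hbne_top, hbne_bot⟩
    have hb0 : b ≤ 0 := by exact_mod_cast hbS.1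
    have htb' : t ≤ b := by exact_mod_cast htb.le
    have := hGbar b hb0 ▸ hbS.2
    calc h ≤ N b := this
    _ ≤ N t := hanti t b htb'
  have hNy : h ≤ N y := by
    have htend : Tendsto (fun n : ℕ => N (y - 1 / ((n:ℝ)+1))) atTop (𝓝 (N y)) := by
      refine tendsto_setIntegral_seq μ _ hfneg _ _ (fun n => measurableSet_Ico)
        measurableSet_Ico ?_
      intro z
      by_cases hz : y ≤ z
      · filter_upwards with n
        simp only [mem_Ico]
        have hpos : (0:ℝ) < 1 / ((n:ℝ)+1) := by positivity
        constructor
        · intro hn; exact ⟨hz, hn.2⟩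
        · intro hn; exact ⟨by linarith, hn.2⟩
      · push_neg at hz
        have : ∀ᶠ n : ℕ in atTop, z < y - 1 / ((n:ℝ)+1) := by
          have h2 : Tendsto (fun n : ℕ => y - 1 / ((n:ℝ)+1)) atTop (𝓝 (y - 0)) :=
            tendsto_const_nhds.sub oneover_tendsto
          rw [sub_zero] at h2
          exact h2.eventually (eventually_gt_nhds hz)
        filter_upwards [this] with n hn
        simp only [mem_Ico]
        constructor
        · intro hc; linarith [hc.1]
        · intro hc; exact absurd hc.1 (not_le.mpr hz)
    refine ge_of_tendsto' htend fun n => hbelow _ ?_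
    have : (0:ℝ) < 1 / ((n:ℝ)+1) := by positivity
    linarith
  refine ⟨y, hyeq.symm, hy0, ?_⟩
  intro O hO hyO
  obtain ⟨ε, hε, hball⟩ := Metric.isOpen_iff.mp hO y hyO
  set t : ℝ := min (y + ε) (y / 2) with htdef
  have hyt : y < t := lt_min (by linarith) (by linarith)
  have ht0 : t < 0 := lt_of_le_of_lt (min_le_right _ _) (by linarith)
  have htS : N t < h := by
    by_contra hcon
    push_neg at hcon
    have : (t : EReal) ∈ S := ⟨by exact_mod_cast ht0.le, by rw [hGbar t ht0.le]; exact hcon⟩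
    have : (t : EReal) ≤ y' := le_sSup this
    rw [← hyeq] at this
    exact absurd (by exact_mod_cast this : t ≤ y) (not_le.mpr hyt)
  have hsplit : N y = (∫ z in Set.Ico y t, -z ∂μ) + N t := by
    rw [hNdef]
    simp only
    rw [← Ico_union_Ico_eq_Ico hyt.le ht0.le,
      setIntegral_union (Set.Ico_disjoint_Ico_same) measurableSet_Ico
      hfneg.integrableOn hfneg.integrableOn]
  have hpospart : 0 < ∫ z in Set.Ico y t, -z ∂μ := by linarith
  have hμpos : 0 < μ (Set.Ico y t) := by
    rcases eq_or_lt_of_le (zero_le : (0:ENNReal) ≤ μ (Set.Ico y t)) with hc | hc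
    · exfalso
      have : μ.restrict (Set.Ico y t) = 0 := Measure.restrict_eq_zero.mpr hc.symm
      rw [setIntegral_congr_set (by rfl), this] at hpospart
      · simp at hpospart
    · exact hc
  refine lt_of_lt_of_le hμpos (measure_mono fun z hz => hball ?_)
  simp only [Metric.mem_ball, Real.dist_eq, abs_lt]
  have h1 : t ≤ y + ε := min_le_left _ _
  constructor <;> [skip; skip] <;> cases hz with
  | intro h2 h3 => linarith

lemma key_pos (μ : Measure ℝ) (hf : Integrable (fun z : ℝ => z) μ) {h : ℝ}
    (h0 : 0 < h) (hm : h < ∫ z in Set.Ioi (0:ℝ), z ∂μ) :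
    ∃ y : ℝ, xPlus μ h = (y : EReal) ∧ 0 < y ∧ y ∈ measSupport μ := by
  classical
  set N : ℝ → ℝ := fun t => ∫ z in Set.Ioc (0:ℝ) t, z ∂μ with hNdef
  have hnonneg : ∀ s : Set ℝ, s ⊆ Ioi 0 → MeasurableSet s →
      (0 : ℝ → ℝ) ≤ᵐ[μ.restrict s] fun z => z := by
    intro s hs hsm
    refine (ae_restrict_iff' hsm).mpr (Filter.Eventually.of_forall fun z hz => ?_)
    have := hs hz
    simp only [Pi.zero_apply]
    simp only [mem_Ioi] at this
    linarith
  have hmono : ∀ s t : ℝ, s ≤ t → N s ≤ N t := by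
    intro s t hst
    refine setIntegral_mono_set hf.integrableOn
      (hnonneg _ Ioc_subset_Ioi_self measurableSet_Ioc)
      (HasSubset.Subset.eventuallyLE (Ioc_subset_Ioc_right hst))
  have hGbar : ∀ t : ℝ, 0 ≤ t → Gbar μ (t : EReal) = N t := by
    intro t ht; rw [Gbar_coe, G_nonneg_eq μ ht]
  set S : Set EReal := {x : EReal | 0 ≤ x ∧ Gbar μ x ≥ h} with hSdef
  have hmemA : ∃ a : ℝ, 0 ≤ a ∧ h < N a := by
    have htend : Tendsto (fun n : ℕ => N ((n:ℝ))) atTop (𝓝 (∫ z in Set.Ioi (0:ℝ), z ∂μ)) := by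
      refine tendsto_setIntegral_seq μ _ hf _ _ (fun n => measurableSet_Ioc)
        measurableSet_Ioi ?_
      intro z
      by_cases hz : 0 < z
      · filter_upwards [natcast_eventually z] with n hn
        simp only [mem_Ioc, mem_Ioi]
        exact ⟨fun h' => h'.1, fun h' => ⟨hz, hn⟩⟩
      · filter_upwards with n
        simp only [mem_Ioc, mem_Ioi]
        exact ⟨fun h' => absurd h'.1 hz, fun h' => absurd h' hz⟩
    obtain ⟨n, hn⟩ := (htend.eventually (eventually_gt_nhds hm)).exists
    exact ⟨(n:ℝ), Nat.cast_nonneg n, hn⟩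
  obtain ⟨a, ha0, haN⟩ := hmemA
  have hSa : (a : EReal) ∈ S := by
    refine ⟨by exact_mod_cast ha0, ?_⟩
    rw [hGbar a ha0]; exact haN.le
  have hmemD : ∃ δ : ℝ, 0 < δ ∧ N δ < h := by
    have htend : Tendsto (fun n : ℕ => N (1 / ((n:ℝ)+1))) atTop (𝓝 (∫ z in (∅ : Set ℝ), z ∂μ)) := by
      refine tendsto_setIntegral_seq μ _ hf _ _ (fun n => measurableSet_Ioc)
        MeasurableSet.empty ?_
      intro z
      by_cases hz : 0 < z
      · have : ∀ᶠ n : ℕ in atTop, 1 / ((n:ℝ)+1) < z :=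
          oneover_tendsto.eventually (eventually_lt_nhds hz)
        filter_upwards [this] with n hn
        simp only [mem_Ioc, mem_empty_iff_false, iff_false, not_and, not_le]
        intro _; exact hn
      · filter_upwards with n
        simp only [mem_Ioc, mem_empty_iff_false, iff_false, not_and, not_le]
        intro hc; exact absurd hc hz
    rw [setIntegral_empty] at htend
    obtain ⟨n, hn⟩ := (htend.eventually (eventually_lt_nhds h0)).exists
    exact ⟨1 / ((n:ℝ)+1), by positivity, hn⟩
  obtain ⟨δ, hδ0, hδN⟩ := hmemD
  have hSge : ∀ x ∈ S, (δ : EReal) ≤ x := by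
    intro x hx
    by_contra hcon
    push_neg at hcon
    have hxne_top : x ≠ ⊤ := ne_of_lt (hcon.trans (EReal.coe_lt_top δ))
    have hxne_bot : x ≠ ⊥ := by
      intro hxb
      rw [hxb] at hx
      exact absurd hx.1 (by simp)
    lift x to ℝ using ⟨hxne_top, hxne_bot⟩
    have hx0 : 0 ≤ x := by exact_mod_cast hx.1
    have hxδ : x ≤ δ := by exact_mod_cast hcon.le
    have hx2 : h ≤ N x := by rw [← hGbar x hx0]; exact hx.2
    linarith [hmono x δ hxδ]
  set y' : EReal := sInf S with hy'def
  have hy'a : y' ≤ (a : EReal) := sInf_le hSa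
  have hy'δ : (δ : EReal) ≤ y' := le_sInf hSge
  have hy'ne_top : y' ≠ ⊤ := ne_of_lt (lt_of_le_of_lt hy'a (EReal.coe_lt_top a))
  have hy'ne_bot : y' ≠ ⊥ := ne_of_gt (lt_of_lt_of_le (EReal.bot_lt_coe δ) hy'δ)
  set y : ℝ := y'.toReal with hydef
  have hyeq : (y : EReal) = y' := EReal.coe_toReal hy'ne_top hy'ne_bot
  have hyδ : δ ≤ y := by exact_mod_cast hyeq ▸ hy'δ
  have hy0 : 0 < y := lt_of_lt_of_le hδ0 hyδ
  have habove : ∀ t : ℝ, y < t → h ≤ N t := by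
    intro t ht
    have : y' < (t : EReal) := by rw [← hyeq]; exact_mod_cast ht
    obtain ⟨b, hbS, hbt⟩ := sInf_lt_iff.mp this
    have hbne_top : b ≠ ⊤ := ne_of_lt (hbt.trans (EReal.coe_lt_top t))
    have hbne_bot : b ≠ ⊥ := by
      intro hbb; rw [hbb] at hbS; exact absurd hbS.1 (by simp)
    lift b to ℝ using ⟨hbne_top, hbne_bot⟩
    have hb0 : 0 ≤ b := by exact_mod_cast hbS.1
    have hbt' : b ≤ t := by exact_mod_cast hbt.le
    have hb2 : h ≤ N b := by rw [← hGbar b hb0]; exact hbS.2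
    exact hb2.trans (hmono b t hbt')
  have hNy : h ≤ N y := by
    have htend : Tendsto (fun n : ℕ => N (y + 1 / ((n:ℝ)+1))) atTop (𝓝 (N y)) := by
      refine tendsto_setIntegral_seq μ _ hf _ _ (fun n => measurableSet_Ioc)
        measurableSet_Ioc ?_
      intro z
      by_cases hz : z ≤ y
      · filter_upwards with n
        simp only [mem_Ioc]
        have hpos : (0:ℝ) < 1 / ((n:ℝ)+1) := by positivity
        exact ⟨fun hc => ⟨hc.1, hz⟩, fun hc => ⟨hc.1, by linarith⟩⟩
      · push_neg at hz
        have : ∀ᶠ n : ℕ in atTop, y + 1 / ((n:ℝ)+1) < z := by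
          have h2 : Tendsto (fun n : ℕ => y + 1 / ((n:ℝ)+1)) atTop (𝓝 (y + 0)) :=
            tendsto_const_nhds.add oneover_tendsto
          rw [add_zero] at h2
          exact h2.eventually (eventually_lt_nhds hz)
        filter_upwards [this] with n hn
        simp only [mem_Ioc]
        exact ⟨fun hc => absurd hc.2 (not_le.mpr (by linarith)),
          fun hc => absurd hc.2 (not_le.mpr hz)⟩
    refine ge_of_tendsto' htend fun n => habove _ ?_
    have : (0:ℝ) < 1 / ((n:ℝ)+1) := by positivity
    linarith
  refine ⟨y, hyeq.symm, hy0, ?_⟩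
  intro O hO hyO
  obtain ⟨ε, hε, hball⟩ := Metric.isOpen_iff.mp hO y hyO
  set t : ℝ := max (y - ε) (y / 2) with htdef
  have hyt : t < y := max_lt (by linarith) (by linarith)
  have ht0 : 0 < t := lt_of_lt_of_le (by linarith) (le_max_right _ _)
  have htS : N t < h := by
    by_contra hcon
    push_neg at hcon
    have : (t : EReal) ∈ S := ⟨by exact_mod_cast ht0.le, by rw [hGbar t ht0.le]; exact hcon⟩
    have : y' ≤ (t : EReal) := sInf_le this
    rw [← hyeq] at this
    exact absurd (by exact_mod_cast this : y ≤ t) (not_le.mpr hyt)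
  have hsplit : N y = N t + ∫ z in Set.Ioc t y, z ∂μ := by
    rw [hNdef]
    simp only
    rw [← Ioc_union_Ioc_eq_Ioc ht0.le hyt.le,
      setIntegral_union (Set.Ioc_disjoint_Ioc_of_le le_rfl) measurableSet_Ioc
      hf.integrableOn hf.integrableOn]
  have hpospart : 0 < ∫ z in Set.Ioc t y, z ∂μ := by linarith
  have hμpos : 0 < μ (Set.Ioc t y) := by
    rcases eq_or_lt_of_le (zero_le : (0:ENNReal) ≤ μ (Set.Ioc t y)) with hc | hc
    · exfalso
      have hz : μ.restrict (Set.Ioc t y) = 0 := Measure.restrict_eq_zero.mpr hc.symm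
      rw [show (∫ z in Set.Ioc t y, z ∂μ) = ∫ z, z ∂(μ.restrict (Set.Ioc t y)) from rfl,
        hz] at hpospart
      simp at hpospart
    · exact hc
  refine lt_of_lt_of_le hμpos (measure_mono fun z hz => hball ?_)
  simp only [Metric.mem_ball, Real.dist_eq, abs_lt]
  have h1 : y - ε ≤ t := le_max_left _ _
  obtain ⟨h2, h3⟩ := hz
  constructor <;> linarith

lemma exists_null_cover_up (μ : Measure ℝ) (A : Set ℝ) (T : ℝ → Set ℝ)
    (hTm : ∀ x, MeasurableSet (T x)) (hTnull : ∀ x ∈ A, μ (T x) = 0)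
    (hmem : ∀ a ∈ A, ∀ b ∈ A, a ≤ b → a ∈ T b) :
    ∃ M : Set ℝ, MeasurableSet M ∧ μ M = 0 ∧ A ⊆ M := by
  rcases A.eq_empty_or_nonempty with rfl | hne
  · exact ⟨∅, MeasurableSet.empty, measure_empty, by simp⟩
  by_cases hbdd : BddAbove A
  · set c := sSup A with hc
    by_cases hcA : c ∈ A
    · exact ⟨T c, hTm c, hTnull c hcA, fun a ha => hmem a ha c hcA (le_csSup hbdd ha)⟩
    · obtain ⟨u, humono, hutend, huA⟩ := exists_seq_tendsto_sSup hne hbdd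
      refine ⟨⋃ n, T (u n), MeasurableSet.iUnion (fun n => hTm (u n)),
        measure_iUnion_null (fun n => hTnull _ (huA n)), fun a ha => ?_⟩
      have halt : a < c := lt_of_le_of_ne (le_csSup hbdd ha) (fun hh => hcA (hh ▸ ha))
      obtain ⟨n, hn⟩ := (hutend.eventually (eventually_gt_nhds halt)).exists
      exact Set.mem_iUnion.mpr ⟨n, hmem a ha (u n) (huA n) hn.le⟩
  · have hch : ∀ n : ℕ, ∃ x ∈ A, (n:ℝ) < x := by
      intro n
      obtain ⟨x, hxA, hx⟩ := not_bddAbove_iff.mp hbdd (n:ℝ)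
      exact ⟨x, hxA, hx⟩
    choose u huA hu using hch
    refine ⟨⋃ n, T (u n), MeasurableSet.iUnion (fun n => hTm (u n)),
      measure_iUnion_null (fun n => hTnull _ (huA n)), fun a ha => ?_⟩
    obtain ⟨n, hn⟩ := exists_nat_ge a
    exact Set.mem_iUnion.mpr ⟨n, hmem a ha (u n) (huA n) (hn.trans (hu n).le)⟩

lemma exists_null_cover_down (μ : Measure ℝ) (A : Set ℝ) (T : ℝ → Set ℝ)
    (hTm : ∀ x, MeasurableSet (T x)) (hTnull : ∀ x ∈ A, μ (T x) = 0)
    (hmem : ∀ a ∈ A, ∀ b ∈ A, b ≤ a → a ∈ T b) :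
    ∃ M : Set ℝ, MeasurableSet M ∧ μ M = 0 ∧ A ⊆ M := by
  rcases A.eq_empty_or_nonempty with rfl | hne
  · exact ⟨∅, MeasurableSet.empty, measure_empty, by simp⟩
  by_cases hbdd : BddBelow A
  · set c := sInf A with hc
    by_cases hcA : c ∈ A
    · exact ⟨T c, hTm c, hTnull c hcA, fun a ha => hmem a ha c hcA (csInf_le hbdd ha)⟩
    · obtain ⟨u, humono, hutend, huA⟩ := exists_seq_tendsto_sInf hne hbdd
      refine ⟨⋃ n, T (u n), MeasurableSet.iUnion (fun n => hTm (u n)),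
        measure_iUnion_null (fun n => hTnull _ (huA n)), fun a ha => ?_⟩
      have halt : c < a := lt_of_le_of_ne (csInf_le hbdd ha) (fun hh => hcA (hh ▸ ha))
      obtain ⟨n, hn⟩ := (hutend.eventually (eventually_lt_nhds halt)).exists
      exact Set.mem_iUnion.mpr ⟨n, hmem a ha (u n) (huA n) hn.le⟩
  · have hch : ∀ n : ℕ, ∃ x ∈ A, x < -(n:ℝ) := by
      intro n
      obtain ⟨x, hxA, hx⟩ := not_bddBelow_iff.mp hbdd (-(n:ℝ))
      exact ⟨x, hxA, hx⟩
    choose u huA hu using hch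
    refine ⟨⋃ n, T (u n), MeasurableSet.iUnion (fun n => hTm (u n)),
      measure_iUnion_null (fun n => hTnull _ (huA n)), fun a ha => ?_⟩
    obtain ⟨n, hn⟩ := exists_nat_ge (-a)
    refine Set.mem_iUnion.mpr ⟨n, hmem a ha (u n) (huA n) ?_⟩
    have := hu n
    linarith

lemma leftLim_G_pos (μ : Measure ℝ) (hf : Integrable (fun z : ℝ => z) μ) {x : ℝ} (hx : 0 < x) :
    Function.leftLim (G μ) x = ∫ z in Set.Ioo (0:ℝ) x, z ∂μ := by
  refine leftLim_eq_of_tendsto ?_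
  rw [tendsto_iff_seq_tendsto]
  intro u hu
  have hux : Tendsto u atTop (𝓝 x) := hu.mono_right nhdsWithin_le_nhds
  have hlt : ∀ᶠ n in atTop, u n < x := hu.eventually eventually_mem_nhdsWithin
  have hpos : ∀ᶠ n in atTop, 0 < u n := hux.eventually (eventually_gt_nhds hx)
  have htend : Tendsto (fun n => ∫ z in Set.Ioc (0:ℝ) (u n), z ∂μ) atTop
      (𝓝 (∫ z in Set.Ioo (0:ℝ) x, z ∂μ)) := by
    refine tendsto_setIntegral_seq μ _ hf _ _ (fun n => measurableSet_Ioc) measurableSet_Ioo ?_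
    intro z
    by_cases hz : z ∈ Set.Ioo (0:ℝ) x
    · filter_upwards [hux.eventually (eventually_gt_nhds hz.2)] with n hn
      simp only [mem_Ioc, mem_Ioo]
      exact ⟨fun _ => hz, fun _ => ⟨hz.1, hn.le⟩⟩
    · rw [Set.mem_Ioo, not_and_or] at hz
      rcases hz with hz | hz
      · filter_upwards with n
        simp only [mem_Ioc, mem_Ioo]
        push_neg at hz
        constructor
        · intro hc; exact absurd hc.1 (not_lt.mpr hz)
        · intro hc; exact absurd hc.1 (not_lt.mpr hz)
      · push_neg at hz
        filter_upwards [hlt] with n hn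
        simp only [mem_Ioc, mem_Ioo]
        constructor
        · intro hc; linarith [hc.2]
        · intro hc; linarith [hc.2]
  refine htend.congr' ?_
  filter_upwards [hpos] with n hn
  simp only [Function.comp]
  rw [G, if_pos hn.le]

lemma rightLim_G_neg (μ : Measure ℝ) (hf : Integrable (fun z : ℝ => z) μ) {x : ℝ} (hx : x < 0) :
    Function.rightLim (G μ) x = ∫ z in Set.Ioo x (0:ℝ), -z ∂μ := by
  refine rightLim_eq_of_tendsto ?_
  rw [tendsto_iff_seq_tendsto]
  intro u hu
  have hux : Tendsto u atTop (𝓝 x) := hu.mono_right nhdsWithin_le_nhds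
  have hgt : ∀ᶠ n in atTop, x < u n := hu.eventually eventually_mem_nhdsWithin
  have hneg : ∀ᶠ n in atTop, u n < 0 := hux.eventually (eventually_lt_nhds hx)
  have htend : Tendsto (fun n => ∫ z in Set.Ico (u n) (0:ℝ), -z ∂μ) atTop
      (𝓝 (∫ z in Set.Ioo x (0:ℝ), -z ∂μ)) := by
    refine tendsto_setIntegral_seq μ _ hf.neg _ _ (fun n => measurableSet_Ico) measurableSet_Ioo ?_
    intro z
    by_cases hz : z ∈ Set.Ioo x (0:ℝ)
    · filter_upwards [hux.eventually (eventually_lt_nhds hz.1)] with n hn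
      simp only [mem_Ico, mem_Ioo]
      exact ⟨fun _ => hz, fun _ => ⟨hn.le, hz.2⟩⟩
    · rw [Set.mem_Ioo, not_and_or] at hz
      rcases hz with hz | hz
      · push_neg at hz
        filter_upwards [hgt] with n hn
        simp only [mem_Ico, mem_Ioo]
        constructor
        · intro hc; linarith [hc.1]
        · intro hc; linarith [hc.1]
      · push_neg at hz
        filter_upwards with n
        simp only [mem_Ico, mem_Ioo]
        constructor
        · intro hc; exact absurd hc.2 (not_lt.mpr hz)
        · intro hc; exact absurd hc.2 (not_lt.mpr hz)
  refine htend.congr' ?_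
  filter_upwards [hneg] with n hn
  simp only [Function.comp]
  rw [G, if_neg (not_le.mpr hn)]

lemma leftLim_G_zero (μ : Measure ℝ) (hf : Integrable (fun z : ℝ => z) μ) :
    Function.leftLim (G μ) 0 = 0 := by
  refine leftLim_eq_of_tendsto ?_
  rw [tendsto_iff_seq_tendsto]
  intro u hu
  have hux : Tendsto u atTop (𝓝 0) := hu.mono_right nhdsWithin_le_nhds
  have hlt : ∀ᶠ n in atTop, u n < 0 := hu.eventually eventually_mem_nhdsWithin
  have htend : Tendsto (fun n => ∫ z in Set.Ico (u n) (0:ℝ), -z ∂μ) atTop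
      (𝓝 (∫ z in (∅ : Set ℝ), -z ∂μ)) := by
    refine tendsto_setIntegral_seq μ _ hf.neg _ _ (fun n => measurableSet_Ico)
      MeasurableSet.empty ?_
    intro z
    by_cases hz : z < 0
    · filter_upwards [hux.eventually (eventually_gt_nhds hz)] with n hn
      simp only [mem_Ico, mem_empty_iff_false, iff_false, not_and, not_lt]
      intro hc; linarith
    · filter_upwards with n
      simp only [mem_Ico, mem_empty_iff_false, iff_false, not_and, not_lt]
      intro _; linarith [not_lt.mp hz]
  rw [setIntegral_empty] at htend
  refine htend.congr' ?_
  filter_upwards [hlt] with n hn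
  simp only [Function.comp]
  rw [G, if_neg (not_le.mpr hn)]


/-- Almost surely on `{X ≠ 0}`, `r(X,U)` is a nonzero real number belonging to the
support of the distribution of `X`; in particular `P(X ≠ 0, r(X,U) = 0) = 0`, while
`r(X,U) = 0` on `{X = 0}`. -/

theorem recip_ae_in_support
    {Ω : Type*} [MeasurableSpace Ω] (P : Measure Ω) [IsProbabilityMeasure P]
    (X U : Ω → ℝ) (hX : Measurable X) (hU : Measurable U)
    (hindep : IndepFun X U P)
    (hUunif : Measure.map U P = volume.restrict (Set.Icc (0:ℝ) 1))
    (hint : Integrable X P) (hmean : ∫ ω, X ω ∂P = 0) :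
    (∀ᵐ ω ∂P, X ω ≠ 0 → ∃ y : ℝ,
        recip (Measure.map X P) (X ω) (U ω) = (y : EReal) ∧ y ≠ 0 ∧
        y ∈ measSupport (Measure.map X P)) ∧
    P {ω | X ω ≠ 0 ∧ recip (Measure.map X P) (X ω) (U ω) = 0} = 0 ∧
    (∀ u : ℝ, recip (Measure.map X P) 0 u = 0)     := by
  classical
  set μ := Measure.map X P with hμ
  have hμprob : IsProbabilityMeasure μ := Measure.isProbabilityMeasure_map hX.aemeasurable
  have hasm : AEStronglyMeasurable (fun z : ℝ => z) (Measure.map X P) :=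
    aestronglyMeasurable_id
  have hfi : Integrable (fun z : ℝ => z) μ := by
    rw [hμ]
    exact (integrable_map_measure hasm hX.aemeasurable).mpr hint
  have hmean' : ∫ z, z ∂μ = 0 := by
    have h := integral_map (μ := P) hX.aemeasurable hasm
    rw [hμ, h]
    exact hmean
  -- mean zero : negative truncated mass equals positive
  have hzero_int : ∫ z in ({0} : Set ℝ), z ∂μ = 0 := by
    rw [Measure.restrict_singleton]
    simp
  have hIci_Ioi : ∫ z in Set.Ici (0:ℝ), z ∂μ = ∫ z in Set.Ioi (0:ℝ), z ∂μ := by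
    have : (Set.Ici (0:ℝ)) = {0} ∪ Set.Ioi 0 := by
      ext z; simp [Set.mem_Ici, Set.mem_Ioi, le_iff_lt_or_eq, or_comm, eq_comm]
    rw [this, setIntegral_union (by simp [Set.disjoint_left]) measurableSet_Ioi
      hfi.integrableOn hfi.integrableOn, hzero_int, zero_add]
  have hsplit0 : ∫ z in Set.Iio (0:ℝ), -z ∂μ = ∫ z in Set.Ioi (0:ℝ), z ∂μ := by
    have hIio : ∫ z in Set.Iio (0:ℝ), z ∂μ + ∫ z in Set.Ici (0:ℝ), z ∂μ = 0 := by
      rw [← hmean', ← setIntegral_union (Set.Iio_disjoint_Ici le_rfl) measurableSet_Ici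
        hfi.integrableOn hfi.integrableOn, Set.Iio_union_Ici, setIntegral_univ]
    rw [integral_neg]
    rw [hIci_Ioi] at hIio
    linarith
  -- a.e. facts
  have hU01 : ∀ᵐ ω ∂P, U ω ∈ Set.Ioo (0:ℝ) 1 := by
    have hmeas : MeasurableSet ((Set.Ioo (0:ℝ) 1)ᶜ) := measurableSet_Ioo.compl
    have hnull : P (U ⁻¹' (Set.Ioo (0:ℝ) 1)ᶜ) = 0 := by
      rw [← Measure.map_apply hU hmeas, hUunif, Measure.restrict_apply hmeas]
      have heq : (Set.Ioo (0:ℝ) 1)ᶜ ∩ Set.Icc 0 1 = ({0, 1} : Set ℝ) := by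
        rw [Set.inter_comm, ← Set.diff_eq]
        exact Set.Icc_diff_Ioo_same (by norm_num)
      rw [heq, Set.insert_eq]
      exact measure_union_null Real.volume_singleton Real.volume_singleton
    filter_upwards [measure_eq_zero_iff_ae_notMem.mp hnull] with ω hω
    simpa using hω
  have hae_of_null : ∀ A : Set ℝ, (∃ M : Set ℝ, MeasurableSet M ∧ μ M = 0 ∧ A ⊆ M) →
      ∀ᵐ ω ∂P, X ω ∉ A := by
    rintro A ⟨M, hMm, hM0, hAM⟩
    have hnull : P (X ⁻¹' M) = 0 := by
      rw [hμ] at hM0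
      rwa [← Measure.map_apply hX hMm]
    filter_upwards [measure_eq_zero_iff_ae_notMem.mp hnull] with ω hω hA
    exact hω (hAM hA)
  have hA1 : ∀ᵐ ω ∂P, X ω ∉ {x : ℝ | 0 < x ∧ μ (Set.Ioc 0 x) = 0} := by
    refine hae_of_null _ (exists_null_cover_up μ _ (fun x => Set.Ioc 0 x)
      (fun x => measurableSet_Ioc) (fun x hx => hx.2) ?_)
    rintro a ⟨ha, _⟩ b _ hab
    exact ⟨ha, hab⟩
  have hA2 : ∀ᵐ ω ∂P, X ω ∉ {x : ℝ | 0 < x ∧ μ (Set.Ici x) = 0} := by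
    refine hae_of_null _ (exists_null_cover_down μ _ (fun x => Set.Ici x)
      (fun x => measurableSet_Ici) (fun x hx => hx.2) ?_)
    rintro a ⟨_, _⟩ b _ hba
    exact hba
  have hA3 : ∀ᵐ ω ∂P, X ω ∉ {x : ℝ | x < 0 ∧ μ (Set.Ico x 0) = 0} := by
    refine hae_of_null _ (exists_null_cover_down μ _ (fun x => Set.Ico x 0)
      (fun x => measurableSet_Ico) (fun x hx => hx.2) ?_)
    rintro a ⟨ha, _⟩ b _ hba
    exact ⟨hba, ha⟩
  have hA4 : ∀ᵐ ω ∂P, X ω ∉ {x : ℝ | x < 0 ∧ μ (Set.Iic x) = 0} := by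
    refine hae_of_null _ (exists_null_cover_up μ _ (fun x => Set.Iic x)
      (fun x => measurableSet_Iic) (fun x hx => hx.2) ?_)
    rintro a ⟨_, _⟩ b _ hab
    exact hab
  have hfneg : Integrable (fun z : ℝ => -z) μ := hfi.neg
  have hmain : ∀ᵐ ω ∂P, X ω ≠ 0 → ∃ y : ℝ,
      recip μ (X ω) (U ω) = (y : EReal) ∧ y ≠ 0 ∧ y ∈ measSupport μ := by
    filter_upwards [hU01, hA1, hA2, hA3, hA4] with ω hu h1 h2 h3 h4 hXne
    rcases lt_or_gt_of_ne hXne with hneg | hpos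
    · -- X ω < 0 : use xPlus
      set x := X ω with hx
      have hIco : μ (Set.Ico x 0) ≠ 0 := fun hc => h3 ⟨hneg, hc⟩
      have hIic : μ (Set.Iic x) ≠ 0 := fun hc => h4 ⟨hneg, hc⟩
      have hrec : recip μ x (U ω) = xPlus μ (Gtilde μ x (U ω)) := by
        rw [recip, if_neg (not_le.mpr hneg)]
      set r := ∫ z in Set.Ioo x (0:ℝ), -z ∂μ with hrdef
      set g := ∫ z in Set.Ico x (0:ℝ), -z ∂μ with hgdef
      set m := ∫ z in Set.Iio (0:ℝ), -z ∂μ with hmdef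
      have hGt : Gtilde μ x (U ω) = r + (g - r) * U ω := by
        rw [Gtilde, if_neg (not_le.mpr hneg), rightLim_G_neg μ hfi hneg, G_nonpos μ hneg.le]
      have hr0 : 0 ≤ r := setIntegral_nonneg measurableSet_Ioo (fun z hz => by
        simp only [Set.mem_Ioo] at hz; linarith [hz.2])
      have hrg : r ≤ g := by
        refine setIntegral_mono_set hfneg.integrableOn ?_
          (HasSubset.Subset.eventuallyLE Set.Ioo_subset_Ico_self)
        refine (ae_restrict_iff' measurableSet_Ico).mpr (Filter.Eventually.of_forall
          fun z hz => ?_)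
        simp only [Set.mem_Ico] at hz
        simp only [Pi.zero_apply]
        linarith [hz.2]
      have hgm : g ≤ m := by
        refine setIntegral_mono_set hfneg.integrableOn ?_
          (HasSubset.Subset.eventuallyLE Set.Ico_subset_Iio_self)
        refine (ae_restrict_iff' measurableSet_Iio).mpr (Filter.Eventually.of_forall
          fun z hz => ?_)
        simp only [Set.mem_Iio] at hz
        simp only [Pi.zero_apply]
        linarith
      have hg0 : 0 < g := by
        have hsub : Set.Ico x (0:ℝ) ⊆ Function.support (fun z : ℝ => -z) := by
          intro z hz
          simp only [Set.mem_Ico] at hz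
          simp only [Function.mem_support, ne_eq, neg_eq_zero]
          linarith [hz.2]
        rw [hgdef]
        rw [setIntegral_pos_iff_support_of_nonneg_ae ?_ hfneg.integrableOn]
        · rw [Set.inter_eq_self_of_subset_right hsub]
          exact (zero_le).lt_of_ne (Ne.symm hIco)
        · refine (ae_restrict_iff' measurableSet_Ico).mpr (Filter.Eventually.of_forall
            fun z hz => ?_)
          simp only [Set.mem_Ico] at hz
          simp only [Pi.zero_apply]
          linarith [hz.2]
      have hrm : r < m := by
        have hsplit : m = (∫ z in Set.Iic x, -z ∂μ) + r := by
          rw [hmdef, hrdef, ← Set.Iic_union_Ioo_eq_Iio hneg,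
            setIntegral_union ?_ measurableSet_Ioo hfneg.integrableOn
            hfneg.integrableOn]
          exact Set.disjoint_left.mpr fun z hz1 hz2 => absurd hz2.1 (not_lt.mpr hz1)
        have hpos : 0 < ∫ z in Set.Iic x, -z ∂μ := by
          have hsub : Set.Iic x ⊆ Function.support (fun z : ℝ => -z) := by
            intro z hz
            simp only [Set.mem_Iic] at hz
            simp only [Function.mem_support, ne_eq, neg_eq_zero]
            linarith
          rw [setIntegral_pos_iff_support_of_nonneg_ae ?_ hfneg.integrableOn]
          · rw [Set.inter_eq_self_of_subset_right hsub]
            exact (zero_le).lt_of_ne (Ne.symm hIic)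
          · refine (ae_restrict_iff' measurableSet_Iic).mpr (Filter.Eventually.of_forall
              fun z hz => ?_)
            simp only [Set.mem_Iic] at hz
            simp only [Pi.zero_apply]
            linarith
        linarith
      obtain ⟨hu0, hu1⟩ := hu
      have hh0 : 0 < r + (g - r) * U ω := by nlinarith
      have hhm : r + (g - r) * U ω < m := by nlinarith
      have hhm' : r + (g - r) * U ω < ∫ z in Set.Ioi (0:ℝ), z ∂μ := by
        rw [← hsplit0]; exact hhm
      obtain ⟨y, hyeq, hy0, hysupp⟩ := key_pos μ hfi hh0 hhm'
      refine ⟨y, ?_, ne_of_gt hy0, hysupp⟩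
      rw [hrec, hGt]
      exact hyeq
    · -- X ω > 0 : use xMinus
      set x := X ω with hx
      have hIoc : μ (Set.Ioc 0 x) ≠ 0 := fun hc => h1 ⟨hpos, hc⟩
      have hIci : μ (Set.Ici x) ≠ 0 := fun hc => h2 ⟨hpos, hc⟩
      have hrec : recip μ x (U ω) = xMinus μ (Gtilde μ x (U ω)) := by
        rw [recip, if_pos hpos.le]
      set l := ∫ z in Set.Ioo (0:ℝ) x, z ∂μ with hldef
      set g := ∫ z in Set.Ioc (0:ℝ) x, z ∂μ with hgdef
      set m := ∫ z in Set.Ioi (0:ℝ), z ∂μ with hmdef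
      have hGt : Gtilde μ x (U ω) = l + (g - l) * U ω := by
        rw [Gtilde, if_pos hpos.le, leftLim_G_pos μ hfi hpos, G_nonneg_eq μ hpos.le]
      have hl0 : 0 ≤ l := setIntegral_nonneg measurableSet_Ioo (fun z hz => by
        simp only [Set.mem_Ioo] at hz; linarith [hz.1])
      have hlg : l ≤ g := by
        refine setIntegral_mono_set hfi.integrableOn ?_
          (HasSubset.Subset.eventuallyLE Set.Ioo_subset_Ioc_self)
        refine (ae_restrict_iff' measurableSet_Ioc).mpr (Filter.Eventually.of_forall
          fun z hz => ?_)
        simp only [Set.mem_Ioc] at hz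
        simp only [Pi.zero_apply]
        linarith [hz.1]
      have hgm : g ≤ m := by
        refine setIntegral_mono_set hfi.integrableOn ?_
          (HasSubset.Subset.eventuallyLE Set.Ioc_subset_Ioi_self)
        refine (ae_restrict_iff' measurableSet_Ioi).mpr (Filter.Eventually.of_forall
          fun z hz => ?_)
        simp only [Set.mem_Ioi] at hz
        simp only [Pi.zero_apply]
        linarith
      have hg0 : 0 < g := by
        have hsub : Set.Ioc (0:ℝ) x ⊆ Function.support (fun z : ℝ => z) := by
          intro z hz
          simp only [Set.mem_Ioc] at hz
          simp only [Function.mem_support, ne_eq]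
          linarith [hz.1]
        rw [hgdef]
        rw [setIntegral_pos_iff_support_of_nonneg_ae ?_ hfi.integrableOn]
        · rw [Set.inter_eq_self_of_subset_right hsub]
          exact (zero_le).lt_of_ne (Ne.symm hIoc)
        · refine (ae_restrict_iff' measurableSet_Ioc).mpr (Filter.Eventually.of_forall
            fun z hz => ?_)
          simp only [Set.mem_Ioc] at hz
          simp only [Pi.zero_apply]
          linarith [hz.1]
      have hlm : l < m := by
        have hsplit : m = l + ∫ z in Set.Ici x, z ∂μ := by
          rw [hmdef, hldef, ← Set.Ioo_union_Ici_eq_Ioi hpos,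
            setIntegral_union ?_ measurableSet_Ici hfi.integrableOn hfi.integrableOn]
          exact Set.disjoint_left.mpr fun z hz1 hz2 => absurd hz2 (not_le.mpr hz1.2)
        have hposint : 0 < ∫ z in Set.Ici x, z ∂μ := by
          have hsub : Set.Ici x ⊆ Function.support (fun z : ℝ => z) := by
            intro z hz
            simp only [Set.mem_Ici] at hz
            simp only [Function.mem_support, ne_eq]
            linarith
          rw [setIntegral_pos_iff_support_of_nonneg_ae ?_ hfi.integrableOn]
          · rw [Set.inter_eq_self_of_subset_right hsub]
            exact (zero_le).lt_of_ne (Ne.symm hIci)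
          · refine (ae_restrict_iff' measurableSet_Ici).mpr (Filter.Eventually.of_forall
              fun z hz => ?_)
            simp only [Set.mem_Ici] at hz
            simp only [Pi.zero_apply]
            linarith
        linarith
      obtain ⟨hu0, hu1⟩ := hu
      have hh0 : 0 < l + (g - l) * U ω := by nlinarith
      have hhm : l + (g - l) * U ω < m := by nlinarith
      have hhm' : l + (g - l) * U ω < ∫ z in Set.Iio (0:ℝ), -z ∂μ := by
        rw [hsplit0]; exact hhm
      obtain ⟨y, hyeq, hy0, hysupp⟩ := key_neg μ hfi hh0 hhm'
      refine ⟨y, ?_, ne_of_lt hy0, hysupp⟩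
      rw [hrec, hGt]
      exact hyeq
  refine ⟨hmain, ?_, ?_⟩
  · have hnull : P {ω | ¬ (X ω ≠ 0 → ∃ y : ℝ,
        recip μ (X ω) (U ω) = (y : EReal) ∧ y ≠ 0 ∧ y ∈ measSupport μ)} = 0 :=
      ae_iff.mp hmain
    refine measure_mono_null ?_ hnull
    intro ω hω
    simp only [Set.mem_setOf_eq] at hω ⊢
    intro hc
    obtain ⟨y, hyeq, hy0, _⟩ := hc hω.1
    rw [hω.2] at hyeq
    exact hy0 (by exact_mod_cast hyeq.symm)
  · intro u
    have hG0 : G μ 0 = 0 := by simp [G]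
    have hGt : Gtilde μ 0 u = 0 := by
      rw [Gtilde, if_pos le_rfl, leftLim_G_zero μ hfi, hG0]
      ring
    rw [recip, if_pos le_rfl, hGt, xMinus]
    apply le_antisymm
    · exact sSup_le (fun x hx => hx.1)
    · apply le_sSup
      refine ⟨le_rfl, ?_⟩
      rw [show ((0:EReal)) = ((0:ℝ):EReal) from rfl, Gbar_coe, hG0]
end
end

section
/- Define x̂(x,u) := x₊(G̃(x,u)) for x ≥ 0 and x̂(x,u) := x₋(G̃(x,u)) for x ≤ 0 (the regularizing function). Then almost surely x̂(X,U) = X, where U is uniform on [0,1] and independent of the zero-mean random variable X. -/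
open MeasureTheory ProbabilityTheory Set Function
open Filter Topology

noncomputable section

namespace XhatProof

variable (μ : Measure ℝ) [IsFiniteMeasure μ]

lemma intOn {s : Set ℝ} {a b : ℝ} (hs : s ⊆ Icc a b) :
    IntegrableOn (fun z : ℝ => z) s μ := by
  refine Measure.integrableOn_of_bounded (M := max |a| |b|) (measure_ne_top μ s)
    aestronglyMeasurable_id ?_
  have h1 : ∀ᵐ z ∂μ.restrict (Icc a b), ‖z‖ ≤ max |a| |b| := by
    filter_upwards [ae_restrict_mem measurableSet_Icc] with z hz
    rw [Real.norm_eq_abs, abs_le]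
    constructor
    · calc -(max |a| |b|) ≤ -|a| := by simp [le_max_left]
        _ ≤ a := neg_abs_le a
        _ ≤ z := hz.1
    · calc z ≤ b := hz.2
        _ ≤ |b| := le_abs_self b
        _ ≤ max |a| |b| := le_max_right _ _
  exact h1.filter_mono (ae_mono (Measure.restrict_mono hs le_rfl))

lemma intOn_neg {s : Set ℝ} {a b : ℝ} (hs : s ⊆ Icc a b) :
    IntegrableOn (fun z : ℝ => -z) s μ := (intOn μ hs).neg

lemma G_nonneg_eq {x : ℝ} (hx : 0 ≤ x) : G μ x = ∫ z in Set.Ioc (0:ℝ) x, z ∂μ :=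
  if_pos hx

lemma G_neg_eq {x : ℝ} (hx : x < 0) : G μ x = ∫ z in Set.Ico x 0, -z ∂μ :=
  if_neg (not_le.2 hx)

/-- integral of z over Ioo y x (0 ≤ y < x) tends to 0 as y ↑ x along a sequence -/
lemma leftLim_G {x : ℝ} (hx : 0 ≤ x) :
    Function.leftLim (G μ) x = ∫ z in Set.Ioo (0:ℝ) x, z ∂μ := by
  apply leftLim_eq_of_tendsto
  rcases eq_or_lt_of_le hx with h0 | hxpos
  · -- x = 0
    subst h0
    rw [show Set.Ioo (0:ℝ) 0 = ∅ by simp, setIntegral_empty]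
    rw [Metric.tendsto_nhds]
    intro ε hε
    -- sequence yₙ = -1/(n+1)
    set s : ℕ → Set ℝ := fun n => Set.Ico (-(1:ℝ)/(n+1)) 0 with hs
    have hanti : Antitone s := by
      intro m n hmn
      apply Set.Ico_subset_Ico_left
      have hc : (m:ℝ) ≤ n := Nat.cast_le.mpr hmn
      rw [neg_div, neg_div, neg_le_neg_iff]
      exact one_div_le_one_div_of_le (by positivity) (by linarith)
    have hinter : ⋂ n, s n = ∅ := by
      ext z
      simp only [Set.mem_iInter, Set.mem_Ico, Set.mem_empty_iff_false, iff_false, not_forall]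
      by_cases hz : z < 0
      · obtain ⟨n, hn⟩ := exists_nat_gt (1 / (-z))
        refine ⟨n, fun h => ?_⟩
        have h1 : (1:ℝ)/(n+1) < -z := by
          rw [div_lt_iff₀ (by positivity)]
          rw [div_lt_iff₀ (by linarith)] at hn
          nlinarith
        have := h.1
        rw [neg_div] at this
        linarith
      · exact ⟨0, fun h => hz h.2⟩
    have htend : Tendsto (fun n => ∫ z in s n, -z ∂μ) atTop (𝓝 0) := by
      have := tendsto_setIntegral_of_antitone (μ := μ) (f := fun z : ℝ => -z)
        (fun n => measurableSet_Ico) hanti ⟨0, intOn_neg μ Set.Ico_subset_Icc_self⟩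
      rwa [hinter, setIntegral_empty] at this
    rw [Metric.tendsto_atTop] at htend
    obtain ⟨N, hN⟩ := htend ε hε
    have hNmem : Set.Ioo (-(1:ℝ)/(N+1)) 0 ∈ nhdsWithin (0:ℝ) (Set.Iio 0) :=
      Ioo_mem_nhdsLT (div_neg_of_neg_of_pos (by norm_num) (by positivity))
    filter_upwards [hNmem] with y hy
    have hy0 : y < 0 := hy.2
    rw [G_neg_eq μ hy0, Real.dist_eq, sub_zero, abs_of_nonneg]
    · have hsub : Set.Ico y 0 ⊆ s N := Set.Ico_subset_Ico_left hy.1.le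
      have hmono : ∫ z in Set.Ico y 0, -z ∂μ ≤ ∫ z in s N, -z ∂μ := by
        apply setIntegral_mono_set (intOn_neg μ Set.Ico_subset_Icc_self)
        · filter_upwards [ae_restrict_mem measurableSet_Ico] with z hz
          simp only [Pi.zero_apply, neg_nonneg]
          exact hz.2.le
        · exact HasSubset.Subset.eventuallyLE hsub
      have := hN N le_rfl
      rw [Real.dist_eq, sub_zero] at this
      calc ∫ z in Set.Ico y 0, -z ∂μ ≤ ∫ z in s N, -z ∂μ := hmono
        _ ≤ |∫ z in s N, -z ∂μ| := le_abs_self _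
        _ < ε := this
    · apply setIntegral_nonneg measurableSet_Ico
      intro z hz
      simp only [neg_nonneg]
      exact hz.2.le
  · -- x > 0
    rw [Metric.tendsto_nhds]
    intro ε hε
    set s : ℕ → Set ℝ := fun n => Set.Ioo (x - x/(n+1)) x with hs
    have hanti : Antitone s := by
      intro m n hmn
      apply Set.Ioo_subset_Ioo_left
      have hc : (m:ℝ) ≤ n := Nat.cast_le.mpr hmn
      have : x/((n:ℝ)+1) ≤ x/((m:ℝ)+1) :=
        div_le_div_of_nonneg_left hx (by positivity) (by linarith)
      linarith
    have hinter : ⋂ n, s n = ∅ := by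
      ext z
      simp only [Set.mem_iInter, Set.mem_Ioo, Set.mem_empty_iff_false, iff_false, not_forall]
      by_cases hz : z < x
      · obtain ⟨n, hn⟩ := exists_nat_gt (x / (x - z))
        refine ⟨n, fun h => ?_⟩
        have hxz : 0 < x - z := by linarith
        rw [div_lt_iff₀ hxz] at hn
        have h1 : x/((n:ℝ)+1) < x - z := by
          rw [div_lt_iff₀ (by positivity)]
          nlinarith
        linarith [h.1]
      · exact ⟨0, fun h => hz h.2⟩
    have htend : Tendsto (fun n => ∫ z in s n, z ∂μ) atTop (𝓝 0) := by
      have := tendsto_setIntegral_of_antitone (μ := μ) (f := fun z : ℝ => z)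
        (fun n => measurableSet_Ioo) hanti ⟨0, intOn μ Set.Ioo_subset_Icc_self⟩
      rwa [hinter, setIntegral_empty] at this
    rw [Metric.tendsto_atTop] at htend
    obtain ⟨N, hN⟩ := htend ε hε
    have hyN0 : 0 ≤ x - x/(N+1) := by
      have : x/((N:ℝ)+1) ≤ x := by
        rw [div_le_iff₀ (by positivity)]
        nlinarith
      linarith
    have hyNx : x - x/(N+1) < x := by
      have : 0 < x/((N:ℝ)+1) := by positivity
      linarith
    have hNmem : Set.Ioo (x - x/(N+1)) x ∈ nhdsWithin x (Set.Iio x) :=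
      Ioo_mem_nhdsLT hyNx
    have hNlt : |∫ z in s N, z ∂μ| < ε := by
      have := hN N le_rfl
      rwa [Real.dist_eq, sub_zero] at this
    have hIntSN : IntegrableOn (fun z : ℝ => z) (s N) μ := intOn μ Set.Ioo_subset_Icc_self
    have hnonnegSN : 0 ≤ᵐ[μ.restrict (s N)] fun z : ℝ => z := by
      filter_upwards [ae_restrict_mem measurableSet_Ioo] with z hz
      exact le_of_lt (lt_of_le_of_lt hyN0 hz.1)
    filter_upwards [hNmem] with y hy
    have hy0 : 0 ≤ y := le_trans hyN0 hy.1.le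
    have hyx : y < x := hy.2
    rw [G_nonneg_eq μ hy0, Real.dist_eq]
    have hsub : Set.Ioc (0:ℝ) y ⊆ Set.Ioo (0:ℝ) x :=
      fun z hz => ⟨hz.1, lt_of_le_of_lt hz.2 hyx⟩
    have hIntI : IntegrableOn (fun z : ℝ => z) (Set.Ioo (0:ℝ) x) μ :=
      intOn μ Set.Ioo_subset_Icc_self
    have hGyI : ∫ z in Set.Ioc (0:ℝ) y, z ∂μ ≤ ∫ z in Set.Ioo (0:ℝ) x, z ∂μ := by
      apply setIntegral_mono_set hIntI
      · filter_upwards [ae_restrict_mem measurableSet_Ioo] with z hz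
        exact hz.1.le
      · exact HasSubset.Subset.eventuallyLE hsub
    rw [abs_sub_comm, abs_of_nonneg (sub_nonneg.2 hGyI),
      ← integral_diff measurableSet_Ioc hIntI hsub]
    have hdsub : Set.Ioo (0:ℝ) x \ Set.Ioc (0:ℝ) y ⊆ s N := by
      intro z hz
      rcases hz with ⟨⟨hz1, hz2⟩, hz3⟩
      simp only [Set.mem_Ioc, not_and, not_le] at hz3
      refine ⟨lt_of_le_of_lt hy.1.le ?_, hz2⟩
      exact hz3 hz1
    calc ∫ z in Set.Ioo (0:ℝ) x \ Set.Ioc (0:ℝ) y, z ∂μ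
        ≤ ∫ z in s N, z ∂μ := by
          apply setIntegral_mono_set hIntSN hnonnegSN
          exact HasSubset.Subset.eventuallyLE hdsub
      _ ≤ |∫ z in s N, z ∂μ| := le_abs_self _
      _ < ε := hNlt

lemma rightLim_G {x : ℝ} (hx : x < 0) :
    Function.rightLim (G μ) x = ∫ z in Set.Ioo x (0:ℝ), -z ∂μ := by
  apply rightLim_eq_of_tendsto
  rw [Metric.tendsto_nhds]
  intro ε hε
  set s : ℕ → Set ℝ := fun n => Set.Ioo x (x - x/(n+1)) with hs
  have hxn0 : ∀ n : ℕ, x - x/((n:ℝ)+1) ≤ 0 := by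
    intro n
    have hn0 : (0:ℝ) ≤ (n:ℝ) := Nat.cast_nonneg n
    have : x ≤ x/((n:ℝ)+1) := by
      rw [le_div_iff₀ (by positivity)]
      nlinarith
    linarith
  have hxnx : ∀ n : ℕ, x < x - x/((n:ℝ)+1) := by
    intro n
    have : x/((n:ℝ)+1) < 0 := div_neg_of_neg_of_pos hx (by positivity)
    linarith
  have hanti : Antitone s := by
    intro m n hmn
    apply Set.Ioo_subset_Ioo_right
    have hc : (m:ℝ) ≤ n := Nat.cast_le.mpr hmn
    have : x/((m:ℝ)+1) ≤ x/((n:ℝ)+1) := by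
      rw [div_le_div_iff₀ (by positivity) (by positivity)]
      nlinarith
    linarith
  have hinter : ⋂ n, s n = ∅ := by
    ext z
    simp only [Set.mem_iInter, Set.mem_Ioo, Set.mem_empty_iff_false, iff_false, not_forall]
    by_cases hz : x < z
    · obtain ⟨n, hn⟩ := exists_nat_gt ((-x) / (z - x))
      refine ⟨n, fun h => ?_⟩
      have hzx : 0 < z - x := by linarith
      rw [div_lt_iff₀ hzx] at hn
      have h1 : -(x/((n:ℝ)+1)) < z - x := by
        rw [neg_div', div_lt_iff₀ (by positivity)]
        nlinarith
      linarith [h.2]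
    · exact ⟨0, fun h => hz h.1⟩
  have htend : Tendsto (fun n => ∫ z in s n, -z ∂μ) atTop (𝓝 0) := by
    have := tendsto_setIntegral_of_antitone (μ := μ) (f := fun z : ℝ => -z)
      (fun n => measurableSet_Ioo) hanti ⟨0, intOn_neg μ Set.Ioo_subset_Icc_self⟩
    rwa [hinter, setIntegral_empty] at this
  rw [Metric.tendsto_atTop] at htend
  obtain ⟨N, hN⟩ := htend ε hε
  have hNmem : Set.Ioo x (x - x/(N+1)) ∈ nhdsWithin x (Set.Ioi x) :=
    Ioo_mem_nhdsGT (hxnx N)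
  have hNlt : |∫ z in s N, -z ∂μ| < ε := by
    have := hN N le_rfl
    rwa [Real.dist_eq, sub_zero] at this
  have hIntSN : IntegrableOn (fun z : ℝ => -z) (s N) μ := intOn_neg μ Set.Ioo_subset_Icc_self
  have hnonnegSN : 0 ≤ᵐ[μ.restrict (s N)] fun z : ℝ => -z := by
    filter_upwards [ae_restrict_mem measurableSet_Ioo] with z hz
    simp only [Pi.zero_apply, neg_nonneg]
    exact le_trans hz.2.le (hxn0 N)
  filter_upwards [hNmem] with y hy
  have hy0 : y < 0 := lt_of_lt_of_le hy.2 (hxn0 N)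
  have hxy : x < y := hy.1
  rw [G_neg_eq μ hy0, Real.dist_eq]
  have hsub : Set.Ico y (0:ℝ) ⊆ Set.Ioo x (0:ℝ) :=
    fun z hz => ⟨lt_of_lt_of_le hxy hz.1, hz.2⟩
  have hIntI : IntegrableOn (fun z : ℝ => -z) (Set.Ioo x (0:ℝ)) μ :=
    intOn_neg μ Set.Ioo_subset_Icc_self
  have hGyI : ∫ z in Set.Ico y (0:ℝ), -z ∂μ ≤ ∫ z in Set.Ioo x (0:ℝ), -z ∂μ := by
    apply setIntegral_mono_set hIntI
    · filter_upwards [ae_restrict_mem measurableSet_Ioo] with z hz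
      simp only [Pi.zero_apply, neg_nonneg]
      exact hz.2.le
    · exact HasSubset.Subset.eventuallyLE hsub
  rw [abs_sub_comm, abs_of_nonneg (sub_nonneg.2 hGyI),
    ← integral_diff measurableSet_Ico hIntI hsub]
  have hdsub : Set.Ioo x (0:ℝ) \ Set.Ico y (0:ℝ) ⊆ s N := by
    intro z hz
    rcases hz with ⟨⟨hz1, hz2⟩, hz3⟩
    simp only [Set.mem_Ico, not_and, not_lt] at hz3
    refine ⟨hz1, lt_of_lt_of_le ?_ hy.2.le⟩
    by_contra hcon
    push_neg at hcon
    exact absurd (hz3 hcon) (not_le.2 hz2)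
  calc ∫ z in Set.Ioo x (0:ℝ) \ Set.Ico y (0:ℝ), -z ∂μ
      ≤ ∫ z in s N, -z ∂μ := by
        apply setIntegral_mono_set hIntSN hnonnegSN
        exact HasSubset.Subset.eventuallyLE hdsub
    _ ≤ |∫ z in s N, -z ∂μ| := le_abs_self _
    _ < ε := hNlt


lemma Gbar_coe (x : ℝ) : Gbar μ (x : EReal) = G μ x := by
  rw [Gbar, if_neg (EReal.coe_ne_top x), if_neg (EReal.coe_ne_bot x), EReal.toReal_coe]

lemma key_pos {x u : ℝ} (hx : 0 ≤ x) (hu : 0 < u) (hu1 : u ≤ 1)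
    (hgood : ∀ y, 0 ≤ y → y < x → μ (Set.Ioc y x) ≠ 0) :
    xPlus μ (Gtilde μ x u) = (x : EReal) := by
  set L := ∫ z in Set.Ioo (0:ℝ) x, z ∂μ with hL
  set Gx := ∫ z in Set.Ioc (0:ℝ) x, z ∂μ with hGx
  have hIooIcc : Set.Ioo (0:ℝ) x ⊆ Set.Ioc 0 x := Set.Ioo_subset_Ioc_self
  have hIntIcc : IntegrableOn (fun z : ℝ => z) (Set.Ioc (0:ℝ) x) μ :=
    intOn μ Set.Ioc_subset_Icc_self
  have hnonnegIcc : 0 ≤ᵐ[μ.restrict (Set.Ioc (0:ℝ) x)] fun z : ℝ => z := by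
    filter_upwards [ae_restrict_mem measurableSet_Ioc] with z hz
    exact hz.1.le
  have hLG : L ≤ Gx :=
    setIntegral_mono_set hIntIcc hnonnegIcc (HasSubset.Subset.eventuallyLE hIooIcc)
  have hGt : Gtilde μ x u = L + (Gx - L) * u := by
    rw [Gtilde, if_pos hx, leftLim_G μ hx, G_nonneg_eq μ hx]
  set h := Gtilde μ x u with hh
  have hhL : L ≤ h := by
    rw [hGt]; nlinarith
  have hhG : h ≤ Gx := by
    rw [hGt]; nlinarith
  have hmem : (x : EReal) ∈ {y : EReal | 0 ≤ y ∧ Gbar μ y ≥ h} := by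
    refine ⟨EReal.coe_nonneg.mpr hx, ?_⟩
    rw [ge_iff_le, Gbar_coe, G_nonneg_eq μ hx]
    exact hhG
  refine le_antisymm (sInf_le hmem) (le_sInf ?_)
  rintro y ⟨hy0, hyG⟩
  induction y using EReal.rec with
  | bot => exact absurd hy0 (by simp)
  | top => exact le_top
  | coe t =>
    rw [ge_iff_le, Gbar_coe] at hyG
    have ht0 : (0:ℝ) ≤ t := EReal.coe_nonneg.mp hy0
    rw [EReal.coe_le_coe_iff]
    by_contra hcon
    push_neg at hcon
    rw [G_nonneg_eq μ ht0] at hyG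
    have hsubt : Set.Ioc (0:ℝ) t ⊆ Set.Ioo 0 x :=
      fun z hz => ⟨hz.1, lt_of_le_of_lt hz.2 hcon⟩
    have hIntIoo : IntegrableOn (fun z : ℝ => z) (Set.Ioo (0:ℝ) x) μ :=
      intOn μ Set.Ioo_subset_Icc_self
    have hdiff : ∫ z in Set.Ioo (0:ℝ) x \ Set.Ioc 0 t, z ∂μ
        = L - ∫ z in Set.Ioc (0:ℝ) t, z ∂μ :=
      integral_diff measurableSet_Ioc hIntIoo hsubt
    have hseteq : Set.Ioo (0:ℝ) x \ Set.Ioc 0 t = Set.Ioo t x := by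
      ext z
      simp only [Set.mem_diff, Set.mem_Ioo, Set.mem_Ioc, not_and, not_le]
      constructor
      · rintro ⟨⟨hz1, hz2⟩, hz3⟩
        exact ⟨hz3 hz1, hz2⟩
      · rintro ⟨hz1, hz2⟩
        exact ⟨⟨lt_of_le_of_lt ht0 hz1, hz2⟩, fun _ => hz1⟩
    rw [hseteq] at hdiff
    rcases eq_or_ne (μ (Set.Ioo t x)) 0 with hz | hz
    · have hmid : ∫ z in Set.Ioo t x, z ∂μ = 0 := by
        rw [Measure.restrict_eq_zero.mpr hz, integral_zero_measure]
      have hGtL : (∫ z in Set.Ioc (0:ℝ) t, z ∂μ) = L := by linarith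
      have hIocx : μ (Set.Ioc t x) ≠ 0 := hgood t ht0 hcon
      have hxatom : μ {x} ≠ 0 := by
        intro h0
        apply hIocx
        have hsub2 : Set.Ioc t x ⊆ Set.Ioo t x ∪ {x} := by
          intro z hz'
          rcases eq_or_lt_of_le hz'.2 with he | hlt
          · exact Or.inr (by simp [he])
          · exact Or.inl ⟨hz'.1, hlt⟩
        exact measure_mono_null hsub2 (measure_union_null hz h0)
      have hxpos : 0 < x := lt_of_le_of_lt ht0 hcon
      have hsing : Set.Ioc (0:ℝ) x \ Set.Ioo 0 x = {x} := by
        ext z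
        simp only [Set.mem_diff, Set.mem_Ioc, Set.mem_Ioo, not_and, not_lt,
          Set.mem_singleton_iff]
        constructor
        · rintro ⟨⟨hz1, hz2⟩, hz3⟩
          exact le_antisymm hz2 (hz3 hz1)
        · rintro rfl
          exact ⟨⟨hxpos, le_rfl⟩, fun _ => le_rfl⟩
      have hGxL : Gx - L = (μ {x}).toReal * x := by
        rw [← integral_diff measurableSet_Ioo hIntIcc hIooIcc, hsing, integral_singleton]
        simp [smul_eq_mul, measureReal_def]
      have hGxLpos : 0 < Gx - L := by
        rw [hGxL]
        exact mul_pos (ENNReal.toReal_pos hxatom (measure_ne_top μ _)) hxpos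
      have : G μ x = Gx := G_nonneg_eq μ hx
      have hlth : (∫ z in Set.Ioc (0:ℝ) t, z ∂μ) < h := by
        rw [hGtL, hGt]
        nlinarith
      linarith
    · have hpos : 0 < ∫ z in Set.Ioo t x, z ∂μ := by
        rw [setIntegral_pos_iff_support_of_nonneg_ae ?hnn (intOn μ Set.Ioo_subset_Icc_self)]
        case hnn =>
          filter_upwards [ae_restrict_mem measurableSet_Ioo] with z hz'
          exact le_of_lt (lt_of_le_of_lt ht0 hz'.1)
        have hss : Set.Ioo t x ⊆ Function.support (fun z : ℝ => z) := by
          intro z hz'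
          simp only [Function.mem_support]
          exact ne_of_gt (lt_of_le_of_lt ht0 hz'.1)
        rw [Set.inter_eq_right.mpr hss]
        exact pos_iff_ne_zero.mpr hz
      have : (∫ z in Set.Ioc (0:ℝ) t, z ∂μ) < L := by linarith
      linarith [lt_of_lt_of_le this hhL]


lemma key_neg {x u : ℝ} (hx : x < 0) (hu : 0 < u) (hu1 : u ≤ 1)
    (hgood : ∀ y, x < y → y ≤ 0 → μ (Set.Ico x y) ≠ 0) :
    xMinus μ (Gtilde μ x u) = (x : EReal) := by
  set R := ∫ z in Set.Ioo x (0:ℝ), -z ∂μ with hR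
  set Gx := ∫ z in Set.Ico x (0:ℝ), -z ∂μ with hGx
  have hIooIco : Set.Ioo x (0:ℝ) ⊆ Set.Ico x 0 := Set.Ioo_subset_Ico_self
  have hIntIco : IntegrableOn (fun z : ℝ => -z) (Set.Ico x (0:ℝ)) μ :=
    intOn_neg μ Set.Ico_subset_Icc_self
  have hnonnegIco : 0 ≤ᵐ[μ.restrict (Set.Ico x (0:ℝ))] fun z : ℝ => -z := by
    filter_upwards [ae_restrict_mem measurableSet_Ico] with z hz
    simp only [Pi.zero_apply, neg_nonneg]
    exact hz.2.le
  have hRG : R ≤ Gx :=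
    setIntegral_mono_set hIntIco hnonnegIco (HasSubset.Subset.eventuallyLE hIooIco)
  have hGt : Gtilde μ x u = R + (Gx - R) * u := by
    rw [Gtilde, if_neg (not_le.2 hx), rightLim_G μ hx, G_neg_eq μ hx]
  set h := Gtilde μ x u with hh
  have hhR : R ≤ h := by rw [hGt]; nlinarith
  have hhG : h ≤ Gx := by rw [hGt]; nlinarith
  have hmem : (x : EReal) ∈ {y : EReal | y ≤ 0 ∧ Gbar μ y ≥ h} := by
    refine ⟨?_, ?_⟩
    · exact_mod_cast hx.le
    · rw [ge_iff_le, Gbar_coe, G_neg_eq μ hx]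
      exact hhG
  refine le_antisymm (sSup_le ?_) (le_sSup hmem)
  rintro y ⟨hy0, hyG⟩
  induction y using EReal.rec with
  | bot => exact bot_le
  | top => exact absurd hy0 (by simp)
  | coe t =>
    rw [ge_iff_le, Gbar_coe] at hyG
    have ht0 : t ≤ (0:ℝ) := by exact_mod_cast hy0
    rw [EReal.coe_le_coe_iff]
    by_contra hcon
    push_neg at hcon
    have htneg : t < 0 ∨ t = 0 := lt_or_eq_of_le ht0
    have hGtt : G μ t = ∫ z in Set.Ico t (0:ℝ), -z ∂μ := by
      rcases htneg with hlt | he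
      · exact G_neg_eq μ hlt
      · subst he
        rw [G_nonneg_eq μ le_rfl]
        simp
    rw [hGtt] at hyG
    have hsubt : Set.Ico t (0:ℝ) ⊆ Set.Ioo x 0 :=
      fun z hz => ⟨lt_of_lt_of_le hcon hz.1, hz.2⟩
    have hIntIoo : IntegrableOn (fun z : ℝ => -z) (Set.Ioo x (0:ℝ)) μ :=
      intOn_neg μ Set.Ioo_subset_Icc_self
    have hdiff : ∫ z in Set.Ioo x (0:ℝ) \ Set.Ico t 0, -z ∂μ
        = R - ∫ z in Set.Ico t (0:ℝ), -z ∂μ :=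
      integral_diff measurableSet_Ico hIntIoo hsubt
    have hseteq : Set.Ioo x (0:ℝ) \ Set.Ico t 0 = Set.Ioo x t := by
      ext z
      simp only [Set.mem_diff, Set.mem_Ioo, Set.mem_Ico, not_and, not_lt]
      constructor
      · rintro ⟨⟨hz1, hz2⟩, hz3⟩
        refine ⟨hz1, ?_⟩
        by_contra hc2
        push_neg at hc2
        exact absurd (hz3 hc2) (not_le.2 hz2)
      · rintro ⟨hz1, hz2⟩
        exact ⟨⟨hz1, lt_of_lt_of_le hz2 ht0⟩, fun hz4 => absurd hz2 (not_lt.2 hz4)⟩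
    rw [hseteq] at hdiff
    rcases eq_or_ne (μ (Set.Ioo x t)) 0 with hz | hz
    · have hmid : ∫ z in Set.Ioo x t, -z ∂μ = 0 := by
        rw [Measure.restrict_eq_zero.mpr hz, integral_zero_measure]
      have hGtR : (∫ z in Set.Ico t (0:ℝ), -z ∂μ) = R := by linarith
      have hIcox : μ (Set.Ico x t) ≠ 0 := hgood t hcon ht0
      have hxatom : μ {x} ≠ 0 := by
        intro h0
        apply hIcox
        have hsub2 : Set.Ico x t ⊆ {x} ∪ Set.Ioo x t := by
          intro z hz'
          rcases eq_or_lt_of_le hz'.1 with he | hlt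
          · exact Or.inl (by simp [he.symm])
          · exact Or.inr ⟨hlt, hz'.2⟩
        exact measure_mono_null hsub2 (measure_union_null h0 hz)
      have hsing : Set.Ico x (0:ℝ) \ Set.Ioo x 0 = {x} := by
        ext z
        simp only [Set.mem_diff, Set.mem_Ico, Set.mem_Ioo, not_and, not_lt,
          Set.mem_singleton_iff]
        constructor
        · rintro ⟨⟨hz1, hz2⟩, hz3⟩
          rcases eq_or_lt_of_le hz1 with he | hlt
          · exact he.symm
          · exact absurd hz2 (not_lt.2 (hz3 hlt))
        · rintro rfl
          exact ⟨⟨le_rfl, hx⟩, fun hz4 => absurd hz4 (lt_irrefl _)⟩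
      have hGxR : Gx - R = (μ {x}).toReal * (-x) := by
        rw [← integral_diff measurableSet_Ioo hIntIco hIooIco, hsing, integral_singleton]
        simp [smul_eq_mul, measureReal_def]
      have hGxRpos : 0 < Gx - R := by
        rw [hGxR]
        exact mul_pos (ENNReal.toReal_pos hxatom (measure_ne_top μ _)) (by linarith)
      have hlth : (∫ z in Set.Ico t (0:ℝ), -z ∂μ) < h := by
        rw [hGtR, hGt]
        nlinarith
      linarith
    · have hpos : 0 < ∫ z in Set.Ioo x t, -z ∂μ := by
        rw [setIntegral_pos_iff_support_of_nonneg_ae ?hnn (intOn_neg μ Set.Ioo_subset_Icc_self)]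
        case hnn =>
          filter_upwards [ae_restrict_mem measurableSet_Ioo] with z hz'
          simp only [Pi.zero_apply, neg_nonneg]
          exact le_of_lt (lt_of_lt_of_le hz'.2 ht0)
        have hss : Set.Ioo x t ⊆ Function.support (fun z : ℝ => -z) := by
          intro z hz'
          simp only [Function.mem_support, neg_ne_zero]
          exact ne_of_lt (lt_of_lt_of_le hz'.2 ht0)
        rw [Set.inter_eq_right.mpr hss]
        exact pos_iff_ne_zero.mpr hz
      have : (∫ z in Set.Ico t (0:ℝ), -z ∂μ) < R := by linarith
      linarith [lt_of_lt_of_le this hhR]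


def Cpos (μ : Measure ℝ) (q r : ℚ) : Set ℝ :=
  if μ (Set.Ioc (q:ℝ) (r:ℝ)) = 0 then Set.Ioc (q:ℝ) (r:ℝ) else ∅

def Mpos (μ : Measure ℝ) (q : ℚ) : Set ℝ :=
  {x : ℝ | (q:ℝ) < x ∧ μ (Set.Ioc (q:ℝ) x) = 0 ∧ ∀ x' : ℝ, x < x' → μ (Set.Ioc (q:ℝ) x') ≠ 0}

def NPos (μ : Measure ℝ) : Set ℝ :=
  (⋃ q : ℚ, ⋃ r : ℚ, Cpos μ q r) ∪ ⋃ q : ℚ, Mpos μ q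

def Cneg (μ : Measure ℝ) (q r : ℚ) : Set ℝ :=
  if μ (Set.Ico (r:ℝ) (q:ℝ)) = 0 then Set.Ico (r:ℝ) (q:ℝ) else ∅

def Mneg (μ : Measure ℝ) (q : ℚ) : Set ℝ :=
  {x : ℝ | x < (q:ℝ) ∧ μ (Set.Ico x (q:ℝ)) = 0 ∧ ∀ x' : ℝ, x' < x → μ (Set.Ico x' (q:ℝ)) ≠ 0}

def NNeg (μ : Measure ℝ) : Set ℝ :=
  (⋃ q : ℚ, ⋃ r : ℚ, Cneg μ q r) ∪ ⋃ q : ℚ, Mneg μ q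

lemma Mpos_subsingleton (q : ℚ) : (Mpos μ q).Subsingleton := by
  intro a ha b hb
  by_contra hne
  rcases lt_or_gt_of_ne hne with hlt | hlt
  · exact ha.2.2 b hlt hb.2.1
  · exact hb.2.2 a hlt ha.2.1

lemma Mneg_subsingleton (q : ℚ) : (Mneg μ q).Subsingleton := by
  intro a ha b hb
  by_contra hne
  rcases lt_or_gt_of_ne hne with hlt | hlt
  · exact hb.2.2 a hlt ha.2.1
  · exact ha.2.2 b hlt hb.2.1

lemma NPos_null : μ (NPos μ) = 0 := by
  apply measure_union_null
  · refine measure_iUnion_null fun q => measure_iUnion_null fun r => ?_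
    rw [Cpos]
    split
    · assumption
    · exact measure_empty
  · refine measure_iUnion_null fun q => ?_
    rcases (Mpos_subsingleton μ q).eq_empty_or_singleton with he | ⟨a, he⟩
    · rw [he]; exact measure_empty
    · rw [he]
      have ha : a ∈ Mpos μ q := by rw [he]; rfl
      have hsub : {a} ⊆ Set.Ioc (q:ℝ) a := by
        intro z hz
        rw [Set.mem_singleton_iff] at hz
        subst hz
        exact ⟨ha.1, le_rfl⟩
      exact measure_mono_null hsub ha.2.1

lemma NNeg_null : μ (NNeg μ) = 0 := by
  apply measure_union_null
  · refine measure_iUnion_null fun q => measure_iUnion_null fun r => ?_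
    rw [Cneg]
    split
    · assumption
    · exact measure_empty
  · refine measure_iUnion_null fun q => ?_
    rcases (Mneg_subsingleton μ q).eq_empty_or_singleton with he | ⟨a, he⟩
    · rw [he]; exact measure_empty
    · rw [he]
      have ha : a ∈ Mneg μ q := by rw [he]; rfl
      have hsub : {a} ⊆ Set.Ico a (q:ℝ) := by
        intro z hz
        rw [Set.mem_singleton_iff] at hz
        subst hz
        exact ⟨le_rfl, ha.1⟩
      exact measure_mono_null hsub ha.2.1

lemma NPos_meas : MeasurableSet (NPos μ) := by
  refine MeasurableSet.union ?_ ?_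
  · refine MeasurableSet.iUnion fun q => MeasurableSet.iUnion fun r => ?_
    rw [Cpos]
    split
    · exact measurableSet_Ioc
    · exact MeasurableSet.empty
  · exact MeasurableSet.iUnion fun q => (Mpos_subsingleton μ q).measurableSet

lemma NNeg_meas : MeasurableSet (NNeg μ) := by
  refine MeasurableSet.union ?_ ?_
  · refine MeasurableSet.iUnion fun q => MeasurableSet.iUnion fun r => ?_
    rw [Cneg]
    split
    · exact measurableSet_Ico
    · exact MeasurableSet.empty
  · exact MeasurableSet.iUnion fun q => (Mneg_subsingleton μ q).measurableSet

lemma mem_NPos {x y : ℝ} (h0y : 0 ≤ y) (hyx : y < x) (hnull : μ (Set.Ioc y x) = 0) :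
    x ∈ NPos μ := by
  obtain ⟨q, hq1, hq2⟩ := exists_rat_btwn hyx
  have hq : μ (Set.Ioc (q:ℝ) x) = 0 :=
    measure_mono_null (Set.Ioc_subset_Ioc_left hq1.le) hnull
  by_cases hall : ∀ x' : ℝ, x < x' → μ (Set.Ioc (q:ℝ) x') ≠ 0
  · exact Or.inr (Set.mem_iUnion.mpr ⟨q, hq2, hq, hall⟩)
  · push_neg at hall
    obtain ⟨x', hxx', hnull'⟩ := hall
    obtain ⟨r, hr1, hr2⟩ := exists_rat_btwn hxx'
    have hcr : μ (Set.Ioc (q:ℝ) (r:ℝ)) = 0 :=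
      measure_mono_null (Set.Ioc_subset_Ioc_right hr2.le) hnull'
    refine Or.inl (Set.mem_iUnion.mpr ⟨q, Set.mem_iUnion.mpr ⟨r, ?_⟩⟩)
    rw [Cpos, if_pos hcr]
    exact ⟨hq2, hr1.le⟩

lemma mem_NNeg {x y : ℝ} (hy0 : y ≤ 0) (hxy : x < y) (hnull : μ (Set.Ico x y) = 0) :
    x ∈ NNeg μ := by
  obtain ⟨q, hq1, hq2⟩ := exists_rat_btwn hxy
  have hq : μ (Set.Ico x (q:ℝ)) = 0 :=
    measure_mono_null (Set.Ico_subset_Ico_right hq2.le) hnull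
  by_cases hall : ∀ x' : ℝ, x' < x → μ (Set.Ico x' (q:ℝ)) ≠ 0
  · exact Or.inr (Set.mem_iUnion.mpr ⟨q, hq1, hq, hall⟩)
  · push_neg at hall
    obtain ⟨x', hxx', hnull'⟩ := hall
    obtain ⟨r, hr1, hr2⟩ := exists_rat_btwn hxx'
    have hcr : μ (Set.Ico (r:ℝ) (q:ℝ)) = 0 :=
      measure_mono_null (Set.Ico_subset_Ico_left hr1.le) hnull'
    refine Or.inl (Set.mem_iUnion.mpr ⟨q, Set.mem_iUnion.mpr ⟨r, ?_⟩⟩)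
    rw [Cneg, if_pos hcr]
    exact ⟨hr2.le, hq1⟩

end XhatProof

/-- Almost surely, `x̂(X,U) = X`. -/
theorem xhat_ae_eq
    {Ω : Type*} [MeasurableSpace Ω] (P : Measure Ω) [IsProbabilityMeasure P]
    (X U : Ω → ℝ) (hX : Measurable X) (hU : Measurable U)
    (hindep : IndepFun X U P)
    (hUunif : Measure.map U P = volume.restrict (Set.Icc (0:ℝ) 1))
    (hint : Integrable X P) (hmean : ∫ ω, X ω ∂P = 0) :
    ∀ᵐ ω ∂P, xhat (Measure.map X P) (X ω) (U ω) = ((X ω : ℝ) : EReal) := by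
  set μ := Measure.map X P with hμ
  have : IsProbabilityMeasure μ := Measure.isProbabilityMeasure_map hX.aemeasurable
  have hXae : ∀ᵐ ω ∂P, X ω ∉ XhatProof.NPos μ ∧ X ω ∉ XhatProof.NNeg μ := by
    have h1 : P (X ⁻¹' (XhatProof.NPos μ ∪ XhatProof.NNeg μ)) = 0 := by
      rw [← Measure.map_apply hX ((XhatProof.NPos_meas μ).union (XhatProof.NNeg_meas μ))]
      exact measure_union_null (XhatProof.NPos_null μ) (XhatProof.NNeg_null μ)
    rw [ae_iff]
    refine measure_mono_null ?_ h1
    intro ω hω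
    simp only [Set.mem_setOf_eq, not_and_or, not_not] at hω
    exact hω
  have hUae : ∀ᵐ ω ∂P, U ω ∈ Set.Ioo (0:ℝ) 1 := by
    have hmeas : MeasurableSet ((Set.Ioo (0:ℝ) 1)ᶜ) := measurableSet_Ioo.compl
    rw [ae_iff]
    have heq : {ω | ¬ U ω ∈ Set.Ioo (0:ℝ) 1} = U ⁻¹' (Set.Ioo (0:ℝ) 1)ᶜ := rfl
    rw [heq, ← Measure.map_apply hU hmeas, hUunif, Measure.restrict_apply hmeas]
    have heq2 : (Set.Ioo (0:ℝ) 1)ᶜ ∩ Set.Icc (0:ℝ) 1 = {0, 1} := by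
      ext z
      simp only [Set.mem_inter_iff, Set.mem_compl_iff, Set.mem_Ioo, Set.mem_Icc,
        Set.mem_insert_iff, Set.mem_singleton_iff, not_and, not_lt]
      constructor
      · rintro ⟨h1, h2, h3⟩
        rcases eq_or_lt_of_le h2 with he | hlt
        · exact Or.inl he.symm
        · exact Or.inr (le_antisymm h3 (h1 hlt))
      · rintro (rfl | rfl)
        · exact ⟨fun h => absurd h (lt_irrefl 0), le_rfl, by norm_num⟩
        · exact ⟨fun _ => le_rfl, by norm_num, le_rfl⟩
    rw [heq2]
    exact Set.Finite.measure_zero (Set.toFinite _) volume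
  filter_upwards [hXae, hUae] with ω hωX hωU
  by_cases hx : 0 ≤ X ω
  · rw [xhat, if_pos hx]
    apply XhatProof.key_pos μ hx hωU.1 hωU.2.le
    intro y hy0 hyx hnull
    exact hωX.1 (XhatProof.mem_NPos μ hy0 hyx hnull)
  · rw [xhat, if_neg hx]
    push_neg at hx
    apply XhatProof.key_neg μ hx hωU.1 hωU.2.le
    intro y hxy hy0 hnull
    exact hωX.2 (XhatProof.mem_NNeg μ hy0 hxy hnull)
end
end

section
/- There exists a [0,1]-valued random variable V (possibly depending on (X,U)) such that r(r(X,U), V) = X almost surely. In particular, if the distribution of X is non-atomic (so that r(x,u) does not depend on u and may be written r(x)), then r(r(X)) = X almost surely. -/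
open MeasureTheory ProbabilityTheory Set Function

noncomputable section

namespace RR
open Filter Topology

def nup (μ : Measure ℝ) : Measure ℝ := μ.withDensity fun z => ENNReal.ofReal z

def nun (μ : Measure ℝ) : Measure ℝ := μ.withDensity fun z => ENNReal.ofReal (-z)

variable {μ : Measure ℝ}

lemma nup_fin (hi : Integrable (fun z => z) μ) : IsFiniteMeasure (nup μ) := by
  constructor
  rw [nup, withDensity_apply _ MeasurableSet.univ]
  rw [Measure.restrict_univ]
  calc ∫⁻ z, ENNReal.ofReal z ∂μ ≤ ∫⁻ z, ‖z‖ₑ ∂μ := by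
        apply lintegral_mono
        intro z
        simp only [Real.enorm_eq_ofReal_abs]
        exact ENNReal.ofReal_le_ofReal (le_abs_self z)
    _ < ⊤ := hi.2

lemma nun_fin (hi : Integrable (fun z => z) μ) : IsFiniteMeasure (nun μ) := by
  constructor
  rw [nun, withDensity_apply _ MeasurableSet.univ]
  rw [Measure.restrict_univ]
  calc ∫⁻ z, ENNReal.ofReal (-z) ∂μ ≤ ∫⁻ z, ‖z‖ₑ ∂μ := by
        apply lintegral_mono
        intro z
        simp only [Real.enorm_eq_ofReal_abs]
        exact ENNReal.ofReal_le_ofReal (neg_le_abs z)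
    _ < ⊤ := hi.2

lemma setInt_pos {s : Set ℝ} (hs : MeasurableSet s) (hpos : ∀ z ∈ s, 0 ≤ z) :
    ∫ z in s, z ∂μ = (nup μ s).toReal := by
  rw [nup, withDensity_apply _ hs]
  rw [integral_eq_lintegral_of_nonneg_ae ((ae_restrict_iff' hs).2 (ae_of_all _ hpos))
    measurable_id.aestronglyMeasurable]

lemma setInt_neg {s : Set ℝ} (hs : MeasurableSet s) (hneg : ∀ z ∈ s, z ≤ 0) :
    ∫ z in s, -z ∂μ = (nun μ s).toReal := by
  rw [nun, withDensity_apply _ hs]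
  rw [integral_eq_lintegral_of_nonneg_ae
    ((ae_restrict_iff' hs).2 (ae_of_all _ (fun z hz => neg_nonneg.2 (hneg z hz))))
    (measurable_id.neg).aestronglyMeasurable]

lemma G_pos {x : ℝ} (hx : 0 ≤ x) : G μ x = (nup μ (Ioc 0 x)).toReal := by
  rw [G, if_pos hx, setInt_pos measurableSet_Ioc (fun z hz => hz.1.le)]

lemma G_neg {x : ℝ} (hx : x < 0) : G μ x = (nun μ (Ico x 0)).toReal := by
  rw [G, if_neg (not_le.2 hx), setInt_neg measurableSet_Ico (fun z hz => hz.2.le)]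

lemma mTot_eq : mTot μ = (nup μ (Ioi 0)).toReal := by
  rw [mTot, setInt_pos measurableSet_Ioi (fun z hz => le_of_lt hz)]

lemma mTot_eq' (hi : Integrable (fun z => z) μ) (hmean : ∫ z, z ∂μ = 0) :
    mTot μ = (nun μ (Iio 0)).toReal := by
  rw [← setInt_neg measurableSet_Iio (fun z hz => le_of_lt hz)]
  rw [integral_neg]
  have h1 : ∫ z in Iio (0:ℝ), z ∂μ + ∫ z in (Iio (0:ℝ))ᶜ, z ∂μ = 0 := by
    rw [integral_add_compl measurableSet_Iio hi, hmean]
  have h2 : (Iio (0:ℝ))ᶜ = {0} ∪ Ioi 0 := by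
    rw [compl_Iio]
    ext z; simp [le_iff_lt_or_eq, Set.mem_union, or_comm, eq_comm]
  have h3 : ∫ z in (Iio (0:ℝ))ᶜ, z ∂μ = mTot μ := by
    rw [h2, setIntegral_union (by simp) measurableSet_Ioi
      (hi.integrableOn) (hi.integrableOn)]
    rw [integral_singleton]
    simp [mTot]
  rw [h3] at h1
  linarith

lemma tendstoL_mono {f : ℝ → ℝ} {c t L : ℝ} (hct : c < t)
    (h1 : ∀ s ∈ Ioo c t, f s ≤ L) (h2 : MonotoneOn f (Ioo c t))
    (h3 : ∀ ε > 0, ∃ s ∈ Ioo c t, L - ε < f s) : Tendsto f (𝓝[<] t) (𝓝 L) := by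
  rw [tendsto_order]
  constructor
  · intro a ha
    obtain ⟨s₀, hs₀, hfs₀⟩ := h3 (L - a) (by linarith)
    filter_upwards [Ioo_mem_nhdsLT_of_mem (⟨hs₀.2, le_refl t⟩ : t ∈ Ioc s₀ t)] with s hs
    have := h2 hs₀ ⟨lt_trans hs₀.1 hs.1, hs.2⟩ hs.1.le
    linarith
  · intro a ha
    filter_upwards [Ioo_mem_nhdsLT_of_mem (⟨hct, le_refl t⟩ : t ∈ Ioc c t)] with s hs
    have := h1 s hs
    linarith

lemma tendstoL_anti {f : ℝ → ℝ} {c t L : ℝ} (hct : c < t)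
    (h1 : ∀ s ∈ Ioo c t, L ≤ f s) (h2 : AntitoneOn f (Ioo c t))
    (h3 : ∀ ε > 0, ∃ s ∈ Ioo c t, f s < L + ε) : Tendsto f (𝓝[<] t) (𝓝 L) := by
  rw [tendsto_order]
  constructor
  · intro a ha
    filter_upwards [Ioo_mem_nhdsLT_of_mem (⟨hct, le_refl t⟩ : t ∈ Ioc c t)] with s hs
    have := h1 s hs
    linarith
  · intro a ha
    obtain ⟨s₀, hs₀, hfs₀⟩ := h3 (a - L) (by linarith)
    filter_upwards [Ioo_mem_nhdsLT_of_mem (⟨hs₀.2, le_refl t⟩ : t ∈ Ioc s₀ t)] with s hs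
    have := h2 hs₀ ⟨lt_trans hs₀.1 hs.1, hs.2⟩ hs.1.le
    linarith

lemma tendstoR_mono {f : ℝ → ℝ} {c t L : ℝ} (hct : t < c)
    (h1 : ∀ s ∈ Ioo t c, L ≤ f s) (h2 : MonotoneOn f (Ioo t c))
    (h3 : ∀ ε > 0, ∃ s ∈ Ioo t c, f s < L + ε) : Tendsto f (𝓝[>] t) (𝓝 L) := by
  rw [tendsto_order]
  constructor
  · intro a ha
    filter_upwards [Ioo_mem_nhdsGT_of_mem (⟨le_refl t, hct⟩ : t ∈ Ico t c)] with s hs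
    have := h1 s hs
    linarith
  · intro a ha
    obtain ⟨s₀, hs₀, hfs₀⟩ := h3 (a - L) (by linarith)
    filter_upwards [Ioo_mem_nhdsGT_of_mem (⟨le_refl t, hs₀.1⟩ : t ∈ Ico t s₀)] with s hs
    have := h2 ⟨hs.1, lt_trans hs.2 hs₀.2⟩ hs₀ hs.2.le
    linarith

lemma tendstoR_anti {f : ℝ → ℝ} {c t L : ℝ} (hct : t < c)
    (h1 : ∀ s ∈ Ioo t c, f s ≤ L) (h2 : AntitoneOn f (Ioo t c))
    (h3 : ∀ ε > 0, ∃ s ∈ Ioo t c, L - ε < f s) : Tendsto f (𝓝[>] t) (𝓝 L) := by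
  rw [tendsto_order]
  constructor
  · intro a ha
    obtain ⟨s₀, hs₀, hfs₀⟩ := h3 (L - a) (by linarith)
    filter_upwards [Ioo_mem_nhdsGT_of_mem (⟨le_refl t, hs₀.1⟩ : t ∈ Ico t s₀)] with s hs
    have := h2 ⟨hs.1, lt_trans hs.2 hs₀.2⟩ hs₀ hs.2.le
    linarith
  · intro a ha
    filter_upwards [Ioo_mem_nhdsGT_of_mem (⟨le_refl t, hct⟩ : t ∈ Ico t c)] with s hs
    have := h1 s hs
    linarith

-- extraction of ε-approximations from monotone unions / intersections of sets

lemma union_approx (ν : Measure ℝ) [IsFiniteMeasure ν] {S : ℕ → Set ℝ} {T : Set ℝ}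
    (hmono : Monotone S) (hU : ⋃ n, S n = T) :
    ∀ ε > 0, ∃ n, (ν T).toReal - ε < (ν (S n)).toReal := by
  intro ε hε
  have h1 : Tendsto (fun n => ν (S n)) atTop (𝓝 (ν T)) := by
    rw [← hU]; exact tendsto_measure_iUnion_atTop hmono
  have h2 : Tendsto (fun n => (ν (S n)).toReal) atTop (𝓝 ((ν T).toReal)) :=
    (ENNReal.tendsto_toReal (measure_ne_top ν T)).comp h1
  obtain ⟨n, hn⟩ := Metric.tendsto_atTop.1 h2 ε hε
  have := hn n le_rfl
  rw [Real.dist_eq] at this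
  exact ⟨n, by cases abs_lt.1 this; linarith⟩

lemma inter_approx (ν : Measure ℝ) [IsFiniteMeasure ν] {S : ℕ → Set ℝ} {T : Set ℝ}
    (hmeas : ∀ n, MeasurableSet (S n)) (hanti : Antitone S) (hI : ⋂ n, S n = T) :
    ∀ ε > 0, ∃ n, (ν (S n)).toReal < (ν T).toReal + ε := by
  intro ε hε
  have h1 : Tendsto (fun n => ν (S n)) atTop (𝓝 (ν T)) := by
    rw [← hI]
    exact tendsto_measure_iInter_atTop (fun n => (hmeas n).nullMeasurableSet) hanti
      ⟨0, measure_ne_top ν _⟩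
  have h2 : Tendsto (fun n => (ν (S n)).toReal) atTop (𝓝 ((ν T).toReal)) :=
    (ENNReal.tendsto_toReal (measure_ne_top ν T)).comp h1
  obtain ⟨n, hn⟩ := Metric.tendsto_atTop.1 h2 ε hε
  have := hn n le_rfl
  rw [Real.dist_eq] at this
  exact ⟨n, by cases abs_lt.1 this; linarith⟩

lemma G_npos {x : ℝ} (hx : x ≤ 0) : G μ x = (nun μ (Ico x 0)).toReal := by
  rcases lt_or_eq_of_le hx with h | h
  · exact G_neg h
  · subst h
    rw [G, if_pos le_rfl, Ioc_self, Ico_self]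
    simp

lemma one_div_succ_pos (n : ℕ) : (0:ℝ) < 1 / (n + 1) := by positivity

lemma tendstoG_left_pos (hi : Integrable (fun z => z) μ) {x : ℝ} (hx : 0 < x) :
    Tendsto (G μ) (𝓝[<] x) (𝓝 ((nup μ (Ioo 0 x)).toReal)) := by
  haveI := nup_fin hi
  apply tendstoL_mono hx
  · intro s hs
    rw [G_pos hs.1.le]
    exact ENNReal.toReal_mono (measure_ne_top _ _)
      (measure_mono (fun z hz => ⟨hz.1, lt_of_le_of_lt hz.2 hs.2⟩))
  · intro a ha b hb hab
    rw [G_pos ha.1.le, G_pos hb.1.le]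
    exact ENNReal.toReal_mono (measure_ne_top _ _) (measure_mono (Ioc_subset_Ioc_right hab))
  · intro ε hε
    have hU : (⋃ n : ℕ, Ioc (0:ℝ) (x - 1/(n+1))) = Ioo 0 x := by
      ext z
      simp only [mem_iUnion, mem_Ioc, mem_Ioo]
      constructor
      · rintro ⟨n, h1, h2⟩
        exact ⟨h1, lt_of_le_of_lt h2 (by have := one_div_succ_pos n; linarith)⟩
      · rintro ⟨h1, h2⟩
        obtain ⟨n, hn⟩ := exists_nat_one_div_lt (show (0:ℝ) < x - z by linarith)
        exact ⟨n, h1, by push_cast at hn ⊢; linarith⟩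
    have hmono : Monotone (fun n : ℕ => Ioc (0:ℝ) (x - 1/(n+1))) := by
      intro a b hab
      apply Ioc_subset_Ioc_right
      have : (1:ℝ)/(b+1) ≤ 1/(a+1) := by
        apply one_div_le_one_div_of_le (by positivity)
        exact_mod_cast by omega
      linarith
    obtain ⟨n, hn⟩ := union_approx (nup μ) hmono hU ε hε
    refine ⟨max (x - 1/(n+1)) (x/2), ⟨lt_max_of_lt_right (by linarith),
      max_lt (by have := one_div_succ_pos n; linarith) (by linarith)⟩, ?_⟩
    rw [G_pos (le_max_of_le_right (by linarith))]
    refine lt_of_lt_of_le hn (ENNReal.toReal_mono (measure_ne_top _ _)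
      (measure_mono (Ioc_subset_Ioc_right (le_max_left _ _))))

lemma tendstoG_left_npos (hi : Integrable (fun z => z) μ) {x : ℝ} (hx : x ≤ 0) :
    Tendsto (G μ) (𝓝[<] x) (𝓝 (G μ x)) := by
  haveI := nun_fin hi
  rw [G_npos hx]
  apply tendstoL_anti (show x - 1 < x by linarith)
  · intro s hs
    rw [G_neg (lt_of_lt_of_le hs.2 hx)]
    exact ENNReal.toReal_mono (measure_ne_top _ _)
      (measure_mono (Ico_subset_Ico_left hs.2.le))
  · intro a ha b hb hab
    rw [G_neg (lt_of_lt_of_le ha.2 hx), G_neg (lt_of_lt_of_le hb.2 hx)]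
    exact ENNReal.toReal_mono (measure_ne_top _ _) (measure_mono (Ico_subset_Ico_left hab))
  · intro ε hε
    have hI : (⋂ n : ℕ, Ico (x - 1/(n+1)) (0:ℝ)) = Ico x 0 := by
      ext z
      simp only [mem_iInter, mem_Ico]
      constructor
      · intro h
        refine ⟨?_, (h 0).2⟩
        by_contra hc
        push_neg at hc
        obtain ⟨n, hn⟩ := exists_nat_one_div_lt (show (0:ℝ) < x - z by linarith)
        have := (h n).1
        push_cast at hn
        linarith
      · intro h n
        exact ⟨by have := one_div_succ_pos n; linarith, h.2⟩
    have hanti : Antitone (fun n : ℕ => Ico (x - 1/(n+1)) (0:ℝ)) := by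
      intro a b hab
      apply Ico_subset_Ico_left
      have : (1:ℝ)/(b+1) ≤ 1/(a+1) := by
        apply one_div_le_one_div_of_le (by positivity)
        exact_mod_cast by omega
      linarith
    obtain ⟨n, hn⟩ := inter_approx (nun μ) (fun n => measurableSet_Ico) hanti hI ε hε
    refine ⟨max (x - 1/(n+1)) (x - 1/2), ⟨lt_max_of_lt_right (by linarith),
      max_lt (by have := one_div_succ_pos n; linarith) (by linarith)⟩, ?_⟩
    rw [G_neg (max_lt (by have := one_div_succ_pos n; linarith) (by linarith))]
    refine lt_of_le_of_lt (ENNReal.toReal_mono (measure_ne_top _ _)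
      (measure_mono (Ico_subset_Ico_left (le_max_left _ _)))) hn

lemma tendstoG_right_neg (hi : Integrable (fun z => z) μ) {x : ℝ} (hx : x < 0) :
    Tendsto (G μ) (𝓝[>] x) (𝓝 ((nun μ (Ioo x 0)).toReal)) := by
  haveI := nun_fin hi
  apply tendstoR_anti hx
  · intro s hs
    rw [G_neg hs.2]
    exact ENNReal.toReal_mono (measure_ne_top _ _)
      (measure_mono (fun z hz => ⟨lt_of_lt_of_le hs.1 hz.1, hz.2⟩))
  · intro a ha b hb hab
    rw [G_neg ha.2, G_neg hb.2]
    exact ENNReal.toReal_mono (measure_ne_top _ _) (measure_mono (Ico_subset_Ico_left hab))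
  · intro ε hε
    have hU : (⋃ n : ℕ, Ico (x + 1/(n+1)) (0:ℝ)) = Ioo x 0 := by
      ext z
      simp only [mem_iUnion, mem_Ico, mem_Ioo]
      constructor
      · rintro ⟨n, h1, h2⟩
        exact ⟨lt_of_lt_of_le (by have := one_div_succ_pos n; linarith) h1, h2⟩
      · rintro ⟨h1, h2⟩
        obtain ⟨n, hn⟩ := exists_nat_one_div_lt (show (0:ℝ) < z - x by linarith)
        exact ⟨n, by push_cast at hn ⊢; linarith, h2⟩
    have hmono : Monotone (fun n : ℕ => Ico (x + 1/(n+1)) (0:ℝ)) := by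
      intro a b hab
      apply Ico_subset_Ico_left
      have : (1:ℝ)/(b+1) ≤ 1/(a+1) := by
        apply one_div_le_one_div_of_le (by positivity)
        exact_mod_cast by omega
      linarith
    obtain ⟨n, hn⟩ := union_approx (nun μ) hmono hU ε hε
    refine ⟨min (x + 1/(n+1)) (x/2), ⟨lt_min (by have := one_div_succ_pos n; linarith)
      (by linarith), min_lt_of_right_lt (by linarith)⟩, ?_⟩
    rw [G_neg (min_lt_of_right_lt (by linarith))]
    refine lt_of_lt_of_le hn (ENNReal.toReal_mono (measure_ne_top _ _)
      (measure_mono (Ico_subset_Ico_left (min_le_left _ _))))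

lemma tendstoG_right_nonneg (hi : Integrable (fun z => z) μ) {x : ℝ} (hx : 0 ≤ x) :
    Tendsto (G μ) (𝓝[>] x) (𝓝 (G μ x)) := by
  haveI := nup_fin hi
  rw [G_pos hx]
  apply tendstoR_mono (show x < x + 1 by linarith)
  · intro s hs
    rw [G_pos (le_of_lt (lt_of_le_of_lt hx hs.1))]
    exact ENNReal.toReal_mono (measure_ne_top _ _)
      (measure_mono (Ioc_subset_Ioc_right hs.1.le))
  · intro a ha b hb hab
    rw [G_pos (le_of_lt (lt_of_le_of_lt hx ha.1)), G_pos (le_of_lt (lt_of_le_of_lt hx hb.1))]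
    exact ENNReal.toReal_mono (measure_ne_top _ _) (measure_mono (Ioc_subset_Ioc_right hab))
  · intro ε hε
    have hI : (⋂ n : ℕ, Ioc (0:ℝ) (x + 1/(n+1))) = Ioc 0 x := by
      ext z
      simp only [mem_iInter, mem_Ioc]
      constructor
      · intro h
        refine ⟨(h 0).1, ?_⟩
        by_contra hc
        push_neg at hc
        obtain ⟨n, hn⟩ := exists_nat_one_div_lt (show (0:ℝ) < z - x by linarith)
        have := (h n).2
        push_cast at hn
        linarith
      · intro h n
        exact ⟨h.1, by have := one_div_succ_pos n; linarith⟩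
    have hanti : Antitone (fun n : ℕ => Ioc (0:ℝ) (x + 1/(n+1))) := by
      intro a b hab
      apply Ioc_subset_Ioc_right
      have : (1:ℝ)/(b+1) ≤ 1/(a+1) := by
        apply one_div_le_one_div_of_le (by positivity)
        exact_mod_cast by omega
      linarith
    obtain ⟨n, hn⟩ := inter_approx (nup μ) (fun n => measurableSet_Ioc) hanti hI ε hε
    refine ⟨min (x + 1/(n+1)) (x + 1/2), ⟨lt_min (by have := one_div_succ_pos n; linarith)
      (by linarith), min_lt_of_right_lt (by linarith)⟩, ?_⟩
    rw [G_pos (le_of_lt (lt_of_le_of_lt hx (lt_min (by have := one_div_succ_pos n; linarith) (by linarith))))]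
    refine lt_of_le_of_lt (ENNReal.toReal_mono (measure_ne_top _ _)
      (measure_mono (Ioc_subset_Ioc_right (min_le_left _ _)))) hn

lemma leftLim_G_pos (hi : Integrable (fun z => z) μ) {x : ℝ} (hx : 0 < x) :
    leftLim (G μ) x = (nup μ (Ioo 0 x)).toReal :=
  leftLim_eq_of_tendsto (tendstoG_left_pos hi hx)

lemma leftLim_G_npos (hi : Integrable (fun z => z) μ) {x : ℝ} (hx : x ≤ 0) :
    leftLim (G μ) x = G μ x :=
  leftLim_eq_of_tendsto (tendstoG_left_npos hi hx)

lemma rightLim_G_neg (hi : Integrable (fun z => z) μ) {x : ℝ} (hx : x < 0) :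
    rightLim (G μ) x = (nun μ (Ioo x 0)).toReal :=
  rightLim_eq_of_tendsto (tendstoG_right_neg hi hx)

lemma rightLim_G_nonneg (hi : Integrable (fun z => z) μ) {x : ℝ} (hx : 0 ≤ x) :
    rightLim (G μ) x = G μ x :=
  rightLim_eq_of_tendsto (tendstoG_right_nonneg hi hx)

lemma meas_split_pos (hi : Integrable (fun z => z) μ) {x : ℝ} (hx : 0 < x) :
    (nup μ (Ioc 0 x)).toReal = (nup μ (Ioo 0 x)).toReal + (nup μ {x}).toReal := by
  haveI := nup_fin hi
  have : Ioc (0:ℝ) x = Ioo 0 x ∪ {x} := by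
    rw [Ioo_union_right hx]
  rw [this, measure_union (by simp) (measurableSet_singleton x),
    ENNReal.toReal_add (measure_ne_top _ _) (measure_ne_top _ _)]

lemma meas_split_neg (hi : Integrable (fun z => z) μ) {x : ℝ} (hx : x < 0) :
    (nun μ (Ico x 0)).toReal = (nun μ (Ioo x 0)).toReal + (nun μ {x}).toReal := by
  haveI := nun_fin hi
  have : Ico x (0:ℝ) = {x} ∪ Ioo x 0 := by
    rw [← Ioo_union_left hx]; exact (union_comm _ _)
  rw [this, measure_union (by simp) measurableSet_Ioo,
    ENNReal.toReal_add (measure_ne_top _ _) (measure_ne_top _ _)]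
  ring

lemma Gtilde_pos (hi : Integrable (fun z => z) μ) {x : ℝ} (hx : 0 < x) (u : ℝ) :
    Gtilde μ x u = (nup μ (Ioo 0 x)).toReal + (nup μ {x}).toReal * u := by
  rw [Gtilde, if_pos hx.le, leftLim_G_pos hi hx, G_pos hx.le, meas_split_pos hi hx]
  ring

lemma Gtilde_neg (hi : Integrable (fun z => z) μ) {x : ℝ} (hx : x < 0) (u : ℝ) :
    Gtilde μ x u = (nun μ (Ioo x 0)).toReal + (nun μ {x}).toReal * u := by
  rw [Gtilde, if_neg (not_le.2 hx), rightLim_G_neg hi hx, G_neg hx, meas_split_neg hi hx]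
  ring

lemma G_zero : G μ 0 = 0 := by
  rw [G, if_pos le_rfl, Ioc_self]
  simp

lemma Gtilde_zero (hi : Integrable (fun z => z) μ) (u : ℝ) : Gtilde μ 0 u = 0 := by
  rw [Gtilde, if_pos le_rfl, leftLim_G_npos hi le_rfl, G_zero]
  ring

lemma Gbar_coe (t : ℝ) : Gbar μ (t : EReal) = G μ t := by
  rw [Gbar, if_neg (EReal.coe_ne_top t), if_neg (EReal.coe_ne_bot t), EReal.toReal_coe]

lemma Gbar_zero_arg : Gbar μ (0 : EReal) = G μ 0 := by
  have : ((0:ℝ) : EReal) = (0 : EReal) := rfl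
  rw [← this, Gbar_coe]

lemma one_div_anti : ∀ a b : ℕ, a ≤ b → (1:ℝ)/(b+1) ≤ 1/(a+1) := by
  intro a b hab
  apply one_div_le_one_div_of_le (by positivity)
  exact_mod_cast by omega

lemma iInter_Ico : ∀ y : ℝ, (⋂ n : ℕ, Ico (y - 1/(n+1)) (0:ℝ)) = Ico y 0 := by
  intro y
  ext z
  simp only [mem_iInter, mem_Ico]
  constructor
  · intro h
    refine ⟨?_, (h 0).2⟩
    by_contra hc
    push_neg at hc
    obtain ⟨n, hn⟩ := exists_nat_one_div_lt (show (0:ℝ) < y - z by linarith)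
    have := (h n).1
    linarith
  · intro h n
    exact ⟨by have := one_div_succ_pos n; linarith, h.2⟩

lemma iUnion_Ico : ∀ y : ℝ, (⋃ n : ℕ, Ico (y + 1/(n+1)) (0:ℝ)) = Ioo y 0 := by
  intro y
  ext z
  simp only [mem_iUnion, mem_Ico, mem_Ioo]
  constructor
  · rintro ⟨n, h1, h2⟩
    exact ⟨lt_of_lt_of_le (by have := one_div_succ_pos n; linarith) h1, h2⟩
  · rintro ⟨h1, h2⟩
    obtain ⟨n, hn⟩ := exists_nat_one_div_lt (show (0:ℝ) < z - y by linarith)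
    exact ⟨n, by linarith, h2⟩

lemma iInter_Ioc : ∀ y : ℝ, (⋂ n : ℕ, Ioc (0:ℝ) (y + 1/(n+1))) = Ioc 0 y := by
  intro y
  ext z
  simp only [mem_iInter, mem_Ioc]
  constructor
  · intro h
    refine ⟨(h 0).1, ?_⟩
    by_contra hc
    push_neg at hc
    obtain ⟨n, hn⟩ := exists_nat_one_div_lt (show (0:ℝ) < z - y by linarith)
    have := (h n).2
    linarith
  · intro h n
    exact ⟨h.1, by have := one_div_succ_pos n; linarith⟩

lemma iUnion_Ioc : ∀ y : ℝ, (⋃ n : ℕ, Ioc (0:ℝ) (y - 1/(n+1))) = Ioo 0 y := by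
  intro y
  ext z
  simp only [mem_iUnion, mem_Ioc, mem_Ioo]
  constructor
  · rintro ⟨n, h1, h2⟩
    exact ⟨h1, lt_of_le_of_lt h2 (by have := one_div_succ_pos n; linarith)⟩
  · rintro ⟨h1, h2⟩
    obtain ⟨n, hn⟩ := exists_nat_one_div_lt (show (0:ℝ) < y - z by linarith)
    exact ⟨n, h1, by linarith⟩

/-- Characterization of `xMinus` for `0 < h < m`. -/

lemma xMinus_char (hi : Integrable (fun z => z) μ) (hmean : ∫ z, z ∂μ = 0) {h : ℝ}
    (h0 : 0 < h) (hm : h < mTot μ) :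
    ∃ y : ℝ, y < 0 ∧ xMinus μ h = (y:EReal) ∧ h ≤ (nun μ (Ico y 0)).toReal ∧
      (nun μ (Ioo y 0)).toReal ≤ h := by
  haveI := nun_fin hi
  set F : ℝ → ℝ := fun t => (nun μ (Ico t 0)).toReal with hF
  have hFanti : ∀ a b : ℝ, a ≤ b → F b ≤ F a := fun a b hab =>
    ENNReal.toReal_mono (measure_ne_top _ _) (measure_mono (Ico_subset_Ico_left hab))
  set T : Set ℝ := {t : ℝ | t ≤ 0 ∧ h ≤ F t} with hT
  -- T is nonempty
  have hne : T.Nonempty := by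
    have hU : (⋃ n : ℕ, Ico (-(n:ℝ)) 0) = Iio 0 := by
      ext z
      simp only [mem_iUnion, mem_Ico, mem_Iio]
      constructor
      · rintro ⟨n, _, h2⟩; exact h2
      · intro hz
        obtain ⟨n, hn⟩ := exists_nat_gt (-z)
        exact ⟨n, by linarith, hz⟩
    have hmono : Monotone (fun n : ℕ => Ico (-(n:ℝ)) 0) := by
      intro a b hab
      exact Ico_subset_Ico_left (by exact_mod_cast neg_le_neg (by exact_mod_cast hab))
    obtain ⟨n, hn⟩ := union_approx (nun μ) hmono hU (mTot μ - h) (by linarith)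
    rw [← mTot_eq' hi hmean] at hn
    exact ⟨-(n:ℝ), by simp, by simp only [hF]; linarith⟩
  have hbdd : BddAbove T := ⟨0, fun t ht => ht.1⟩
  set y := sSup T with hy
  have hyle : y ≤ 0 := csSup_le hne (fun t ht => ht.1)
  -- below y, F stays ≥ h
  have hbelow : ∀ n : ℕ, h ≤ F (y - 1/(n+1)) := by
    intro n
    obtain ⟨t, ht, htgt⟩ := exists_lt_of_lt_csSup hne
      (show y - 1/(n+1) < y by have := one_div_succ_pos n; linarith)
    exact le_trans ht.2 (hFanti _ _ htgt.le)
  -- h ≤ F y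
  have hFy : h ≤ F y := by
    by_contra hc
    push_neg at hc
    obtain ⟨n, hn⟩ := inter_approx (nun μ) (fun n => measurableSet_Ico)
      (fun a b hab => Ico_subset_Ico_left (by have := one_div_anti a b hab; linarith))
      (iInter_Ico y) (h - F y) (by linarith)
    have := hbelow n
    simp only [hF] at hn this
    linarith
  -- y is negative
  have hylt : y < 0 := by
    rcases lt_or_eq_of_le hyle with hlt | heq
    · exact hlt
    · exfalso
      rw [heq] at hFy
      simp only [hF, Ico_self, measure_empty] at hFy
      simp at hFy
      linarith
  -- above y, F is < h
  have habove : ∀ t, y < t → t ≤ 0 → F t < h := by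
    intro t hyt ht0
    by_contra hc
    push_neg at hc
    have : t ≤ y := le_csSup hbdd ⟨ht0, hc⟩
    linarith
  -- right limit bound
  have hIoo : (nun μ (Ioo y 0)).toReal ≤ h := by
    by_contra hc
    push_neg at hc
    obtain ⟨n, hn⟩ := union_approx (nun μ)
      (fun a b hab => Ico_subset_Ico_left (by have := one_div_anti a b hab; linarith))
      (iUnion_Ico y) ((nun μ (Ioo y 0)).toReal - h) (by linarith)
    have hle : F (y + 1/(n+1)) ≤ h := by
      rcases le_or_gt (y + 1/(n+1)) 0 with hle0 | hgt0
      · exact (habove _ (by have := one_div_succ_pos n; linarith) hle0).le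
      · simp only [hF, Ico_eq_empty (not_lt.2 hgt0.le), measure_empty]
        simp
        linarith
    simp only [hF] at hn hle
    linarith
  -- the EReal sup equals y
  refine ⟨y, hylt, ?_, hFy, hIoo⟩
  apply le_antisymm
  · apply sSup_le
    rintro s ⟨hs0, hsG⟩
    induction s using EReal.rec with
    | bot => exact bot_le
    | top => simp at hs0
    | coe t =>
      rw [EReal.coe_le_coe_iff]
      have ht0 : t ≤ 0 := EReal.coe_nonpos.1 hs0
      rw [Gbar_coe, G_npos ht0] at hsG
      by_contra hcon
      push_neg at hcon
      exact absurd hsG (not_le.2 (habove t hcon ht0))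
  · apply le_sSup
    refine ⟨EReal.coe_nonpos.2 hyle, ?_⟩
    rw [Gbar_coe, G_npos hyle]
    exact hFy

/-- Characterization of `xPlus` for `0 < h < m`. -/

lemma xPlus_char (hi : Integrable (fun z => z) μ) {h : ℝ}
    (h0 : 0 < h) (hm : h < mTot μ) :
    ∃ y : ℝ, 0 < y ∧ xPlus μ h = (y:EReal) ∧ h ≤ (nup μ (Ioc 0 y)).toReal ∧
      (nup μ (Ioo 0 y)).toReal ≤ h := by
  haveI := nup_fin hi
  set F : ℝ → ℝ := fun t => (nup μ (Ioc 0 t)).toReal with hF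
  have hFmono : ∀ a b : ℝ, a ≤ b → F a ≤ F b := fun a b hab =>
    ENNReal.toReal_mono (measure_ne_top _ _) (measure_mono (Ioc_subset_Ioc_right hab))
  set T : Set ℝ := {t : ℝ | 0 ≤ t ∧ h ≤ F t} with hT
  have hne : T.Nonempty := by
    have hU : (⋃ n : ℕ, Ioc (0:ℝ) n) = Ioi 0 := by
      ext z
      simp only [mem_iUnion, mem_Ioc, mem_Ioi]
      constructor
      · rintro ⟨n, h1, _⟩; exact h1
      · intro hz
        obtain ⟨n, hn⟩ := exists_nat_gt z
        exact ⟨n, hz, hn.le⟩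
    have hmono : Monotone (fun n : ℕ => Ioc (0:ℝ) n) := by
      intro a b hab
      exact Ioc_subset_Ioc_right (by exact_mod_cast hab)
    obtain ⟨n, hn⟩ := union_approx (nup μ) hmono hU (mTot μ - h) (by linarith)
    rw [← mTot_eq] at hn
    exact ⟨(n:ℝ), by simp, by simp only [hF]; linarith⟩
  have hbdd : BddBelow T := ⟨0, fun t ht => ht.1⟩
  set y := sInf T with hy
  have hyge : 0 ≤ y := le_csInf hne (fun t ht => ht.1)
  have habove' : ∀ n : ℕ, h ≤ F (y + 1/(n+1)) := by
    intro n
    obtain ⟨t, ht, htlt⟩ := exists_lt_of_csInf_lt hne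
      (show y < y + 1/(n+1) by have := one_div_succ_pos n; linarith)
    exact le_trans ht.2 (hFmono _ _ htlt.le)
  have hFy : h ≤ F y := by
    by_contra hc
    push_neg at hc
    obtain ⟨n, hn⟩ := inter_approx (nup μ) (fun n => measurableSet_Ioc)
      (fun a b hab => Ioc_subset_Ioc_right (by have := one_div_anti a b hab; linarith))
      (iInter_Ioc y) (h - F y) (by linarith)
    have := habove' n
    simp only [hF] at hn this
    linarith
  have hylt : 0 < y := by
    rcases lt_or_eq_of_le hyge with hlt | heq
    · exact hlt
    · exfalso
      rw [← heq] at hFy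
      simp only [hF, Ioc_self, measure_empty] at hFy
      simp at hFy
      linarith
  have hbelow : ∀ t, 0 ≤ t → t < y → F t < h := by
    intro t ht0 hty
    by_contra hc
    push_neg at hc
    have : y ≤ t := csInf_le hbdd ⟨ht0, hc⟩
    linarith
  have hIoo : (nup μ (Ioo 0 y)).toReal ≤ h := by
    by_contra hc
    push_neg at hc
    obtain ⟨n, hn⟩ := union_approx (nup μ)
      (fun a b hab => Ioc_subset_Ioc_right (by have := one_div_anti a b hab; linarith))
      (iUnion_Ioc y) ((nup μ (Ioo 0 y)).toReal - h) (by linarith)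
    have hle : F (y - 1/(n+1)) ≤ h := by
      rcases le_or_gt 0 (y - 1/(n+1)) with hle0 | hgt0
      · exact (hbelow _ hle0 (by have := one_div_succ_pos n; linarith)).le
      · simp only [hF, Ioc_eq_empty (not_lt.2 hgt0.le), measure_empty]
        simp
        linarith
    simp only [hF] at hn hle
    linarith
  refine ⟨y, hylt, ?_, hFy, hIoo⟩
  apply le_antisymm
  · apply sInf_le
    refine ⟨EReal.coe_nonneg.2 hyge, ?_⟩
    rw [Gbar_coe, G_pos hyge]
    exact hFy
  · apply le_sInf
    rintro s ⟨hs0, hsG⟩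
    induction s using EReal.rec with
    | bot => simp at hs0
    | top => exact le_top
    | coe t =>
      rw [EReal.coe_le_coe_iff]
      have ht0 : 0 ≤ t := EReal.coe_nonneg.1 hs0
      rw [Gbar_coe, G_pos ht0] at hsG
      by_contra hcon
      push_neg at hcon
      exact absurd hsG (not_le.2 (hbelow t ht0 hcon))

/-- `xPlus` evaluates to a given point. -/

lemma xPlus_eq (hi : Integrable (fun z => z) μ) {h x : ℝ} (hx : 0 < x) (h0 : 0 < h)
    (hhi : h ≤ (nup μ (Ioc 0 x)).toReal)
    (hlo : ∀ t, 0 ≤ t → t < x → (nup μ (Ioc 0 t)).toReal < h) :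
    xPlus μ h = (x:EReal) := by
  apply le_antisymm
  · apply sInf_le
    refine ⟨EReal.coe_nonneg.2 hx.le, ?_⟩
    rw [Gbar_coe, G_pos hx.le]
    exact hhi
  · apply le_sInf
    rintro s ⟨hs0, hsG⟩
    induction s using EReal.rec with
    | bot => simp at hs0
    | top => exact le_top
    | coe t =>
      rw [EReal.coe_le_coe_iff]
      have ht0 : 0 ≤ t := EReal.coe_nonneg.1 hs0
      rw [Gbar_coe, G_pos ht0] at hsG
      by_contra hcon
      push_neg at hcon
      exact absurd hsG (not_le.2 (hlo t ht0 hcon))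

/-- `xMinus` evaluates to a given point. -/

lemma xMinus_eq (hi : Integrable (fun z => z) μ) {h x : ℝ} (hx : x < 0) (h0 : 0 < h)
    (hhi : h ≤ (nun μ (Ico x 0)).toReal)
    (hlo : ∀ t, x < t → t < 0 → (nun μ (Ico t 0)).toReal < h) :
    xMinus μ h = (x:EReal) := by
  apply le_antisymm
  · apply sSup_le
    rintro s ⟨hs0, hsG⟩
    induction s using EReal.rec with
    | bot => exact bot_le
    | top => simp at hs0
    | coe t =>
      rw [EReal.coe_le_coe_iff]
      have ht0 : t ≤ 0 := EReal.coe_nonpos.1 hs0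
      by_contra hcon
      push_neg at hcon
      rcases lt_or_eq_of_le ht0 with htlt | hteq
      · rw [Gbar_coe, G_npos ht0] at hsG
        exact absurd hsG (not_le.2 (hlo t hcon htlt))
      · rw [hteq, Gbar_coe, G_zero] at hsG
        linarith
  · apply le_sSup
    refine ⟨EReal.coe_nonpos.2 hx.le, ?_⟩
    rw [Gbar_coe, G_npos hx.le]
    exact hhi

/-- `xMinus μ 0 = 0`. -/

lemma xMinus_zero : xMinus μ 0 = (0:EReal) := by
  apply le_antisymm
  · exact sSup_le (fun s hs => hs.1)
  · apply le_sSup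
    constructor
    · exact le_refl _
    · rw [Gbar_zero_arg, G_zero]

lemma nup_null_iff {A : Set ℝ} (hA : MeasurableSet A) (hsub : A ⊆ Ioi 0) :
    nup μ A = 0 ↔ μ A = 0 := by
  constructor
  · intro h
    rw [nup, withDensity_apply _ hA] at h
    rw [lintegral_eq_zero_iff ENNReal.measurable_ofReal] at h
    have : A ⊆ {z : ℝ | ENNReal.ofReal z ≠ 0} := by
      intro z hz
      simp only [mem_setOf_eq, ne_eq, ENNReal.ofReal_eq_zero, not_le]
      exact hsub hz
    have h2 : μ.restrict A {z : ℝ | ENNReal.ofReal z ≠ 0} = 0 := by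
      rw [EventuallyEq] at h
      simpa [ae_iff] using h
    have h3 := measure_mono_null this h2
    rwa [Measure.restrict_apply_self] at h3
  · intro h
    exact (withDensity_absolutelyContinuous μ _) h

lemma nun_null_iff {A : Set ℝ} (hA : MeasurableSet A) (hsub : A ⊆ Iio 0) :
    nun μ A = 0 ↔ μ A = 0 := by
  constructor
  · intro h
    rw [nun, withDensity_apply _ hA] at h
    have hmeas : Measurable fun a : ℝ => ENNReal.ofReal (-a) :=
      ENNReal.measurable_ofReal.comp measurable_neg
    rw [lintegral_eq_zero_iff hmeas] at h
    have : A ⊆ {z : ℝ | ENNReal.ofReal (-z) ≠ 0} := by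
      intro z hz
      simp only [mem_setOf_eq, ne_eq, ENNReal.ofReal_eq_zero, not_le, neg_pos]
      exact hsub hz
    have h2 : μ.restrict A {z : ℝ | ENNReal.ofReal (-z) ≠ 0} = 0 := by
      rw [EventuallyEq] at h
      simpa [ae_iff] using h
    have h3 := measure_mono_null this h2
    rwa [Measure.restrict_apply_self] at h3
  · intro h
    exact (withDensity_absolutelyContinuous μ _) h

lemma Ioi_subset_iUnion {c : ℝ} : Ioi c ⊆ ⋃ n : ℕ, Ici (c + 1/(n+1)) := by
  intro z hz
  obtain ⟨n, hn⟩ := exists_nat_one_div_lt (show (0:ℝ) < z - c from sub_pos.2 hz)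
  exact mem_iUnion.2 ⟨n, by simp only [mem_Ici]; linarith⟩

lemma Iio_subset_iUnion {c : ℝ} : Iio c ⊆ ⋃ n : ℕ, Iic (c - 1/(n+1)) := by
  intro z hz
  obtain ⟨n, hn⟩ := exists_nat_one_div_lt (show (0:ℝ) < c - z from sub_pos.2 hz)
  exact mem_iUnion.2 ⟨n, by simp only [mem_Iic]; linarith⟩

lemma null_tail_right (μ : Measure ℝ) : μ {x | μ (Ioi x) = 0 ∧ μ {x} = 0} = 0 := by
  set T := {x | μ (Ioi x) = 0 ∧ μ {x} = 0} with hT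
  have hIci : ∀ x ∈ T, μ (Ici x) = 0 := by
    intro x hx
    have : Ici x ⊆ {x} ∪ Ioi x := by
      intro z hz
      rcases eq_or_lt_of_le (mem_Ici.1 hz) with h | h
      · exact Or.inl (by simp [← h])
      · exact Or.inr h
    exact measure_mono_null this (le_antisymm
      ((measure_union_le _ _).trans (by rw [hx.2, hx.1]; simp)) zero_le)
  rcases T.eq_empty_or_nonempty with hE | hne
  · rw [hE]; exact measure_empty
  rcases em (BddBelow T) with hbdd | hnb
  · set c := sInf T with hc
    have habove : ∀ t, c < t → μ (Ici t) = 0 := by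
      intro t ht
      obtain ⟨x, hx, hxt⟩ := exists_lt_of_csInf_lt hne ht
      exact measure_mono_null (Ici_subset_Ici.2 hxt.le) (hIci x hx)
    have hIoi : μ (Ioi c) = 0 := by
      apply measure_mono_null Ioi_subset_iUnion
      apply measure_iUnion_null
      intro n
      exact habove _ (lt_add_of_pos_right _ (by positivity))
    rcases em (c ∈ T) with hcT | hcT
    · apply measure_mono_null (show T ⊆ {c} ∪ Ioi c from ?_)
      · exact le_antisymm ((measure_union_le _ _).trans
          (by rw [hcT.2, hIoi]; simp)) zero_le
      · intro t ht
        rcases eq_or_lt_of_le (csInf_le hbdd ht) with h | h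
        · exact Or.inl (by simp [← h, hc])
        · exact Or.inr h
    · apply measure_mono_null (show T ⊆ Ioi c from ?_) hIoi
      intro t ht
      rcases eq_or_lt_of_le (csInf_le hbdd ht) with h | h
      · rw [← h] at ht; exact absurd ht hcT
      · exact h
  · have : ∀ t : ℝ, μ (Ici t) = 0 := by
      intro t
      rw [not_bddBelow_iff] at hnb
      obtain ⟨x, hx, hxt⟩ := hnb t
      exact measure_mono_null (Ici_subset_Ici.2 hxt.le) (hIci x hx)
    have hcover : univ ⊆ ⋃ n : ℕ, Ici (-(n:ℝ)) := by
      intro z _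
      obtain ⟨n, hn⟩ := exists_nat_gt (-z)
      exact mem_iUnion.2 ⟨n, by simp only [mem_Ici]; linarith⟩
    exact measure_mono_null (subset_univ T)
      (measure_mono_null hcover (measure_iUnion_null fun n => this _))

lemma null_tail_left (μ : Measure ℝ) : μ {x | μ (Iio x) = 0 ∧ μ {x} = 0} = 0 := by
  set T := {x | μ (Iio x) = 0 ∧ μ {x} = 0} with hT
  have hIic : ∀ x ∈ T, μ (Iic x) = 0 := by
    intro x hx
    have : Iic x ⊆ {x} ∪ Iio x := by
      intro z hz
      rcases eq_or_lt_of_le (mem_Iic.1 hz) with h | h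
      · exact Or.inl (by simp [h])
      · exact Or.inr h
    exact measure_mono_null this (le_antisymm
      ((measure_union_le _ _).trans (by rw [hx.2, hx.1]; simp)) zero_le)
  rcases T.eq_empty_or_nonempty with hE | hne
  · rw [hE]; exact measure_empty
  rcases em (BddAbove T) with hbdd | hnb
  · set c := sSup T with hc
    have hbelow : ∀ t, t < c → μ (Iic t) = 0 := by
      intro t ht
      obtain ⟨x, hx, hxt⟩ := exists_lt_of_lt_csSup hne ht
      exact measure_mono_null (Iic_subset_Iic.2 hxt.le) (hIic x hx)
    have hIio : μ (Iio c) = 0 := by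
      apply measure_mono_null Iio_subset_iUnion
      apply measure_iUnion_null
      intro n
      exact hbelow _ (sub_lt_self _ (by positivity))
    rcases em (c ∈ T) with hcT | hcT
    · apply measure_mono_null (show T ⊆ {c} ∪ Iio c from ?_)
      · exact le_antisymm ((measure_union_le _ _).trans
          (by rw [hcT.2, hIio]; simp)) zero_le
      · intro t ht
        rcases eq_or_lt_of_le (le_csSup hbdd ht) with h | h
        · exact Or.inl (by simp [h, hc])
        · exact Or.inr h
    · apply measure_mono_null (show T ⊆ Iio c from ?_) hIio
      intro t ht
      rcases eq_or_lt_of_le (le_csSup hbdd ht) with h | h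
      · rw [h] at ht; exact absurd ht hcT
      · exact h
  · have : ∀ t : ℝ, μ (Iic t) = 0 := by
      intro t
      rw [not_bddAbove_iff] at hnb
      obtain ⟨x, hx, hxt⟩ := hnb t
      exact measure_mono_null (Iic_subset_Iic.2 hxt.le) (hIic x hx)
    have hcover : univ ⊆ ⋃ n : ℕ, Iic ((n:ℝ)) := by
      intro z _
      obtain ⟨n, hn⟩ := exists_nat_gt z
      exact mem_iUnion.2 ⟨n, by simp only [mem_Iic]; linarith⟩
    exact measure_mono_null (subset_univ T)
      (measure_mono_null hcover (measure_iUnion_null fun n => this _))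

lemma null_gap_right (μ : Measure ℝ) (q : ℝ) :
    μ {x | q < x ∧ μ (Ioo q x) = 0 ∧ μ {x} = 0} = 0 := by
  set T := {x | q < x ∧ μ (Ioo q x) = 0 ∧ μ {x} = 0} with hT
  rcases T.eq_empty_or_nonempty with hE | hne
  · rw [hE]; exact measure_empty
  rcases em (BddAbove T) with hbdd | hnb
  · set s := sSup T with hs
    have hbelow : ∀ t, t < s → μ (Ioo q t) = 0 := by
      intro t ht
      obtain ⟨x, hx, hxt⟩ := exists_lt_of_lt_csSup hne ht
      exact measure_mono_null (Ioo_subset_Ioo_right hxt.le) hx.2.1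
    have hIoo : μ (Ioo q s) = 0 := by
      apply measure_mono_null (show Ioo q s ⊆ ⋃ n : ℕ, Ioo q (s - 1/(n+1)) from ?_)
        (measure_iUnion_null fun n => hbelow _ (sub_lt_self _ (by positivity)))
      intro z hz
      obtain ⟨n, hn⟩ := exists_nat_one_div_lt (show (0:ℝ) < s - z from sub_pos.2 hz.2)
      exact mem_iUnion.2 ⟨n, hz.1, by linarith⟩
    rcases em (s ∈ T) with hsT | hsT
    · apply measure_mono_null (show T ⊆ Ioo q s ∪ {s} from ?_)
      · exact le_antisymm ((measure_union_le _ _).trans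
          (by rw [hsT.2.2, hIoo]; simp)) zero_le
      · intro t ht
        rcases eq_or_lt_of_le (le_csSup hbdd ht) with h | h
        · exact Or.inr (by simp [h, hs])
        · exact Or.inl ⟨ht.1, h⟩
    · apply measure_mono_null (show T ⊆ Ioo q s from ?_) hIoo
      intro t ht
      rcases eq_or_lt_of_le (le_csSup hbdd ht) with h | h
      · rw [h] at ht; exact absurd ht hsT
      · exact ⟨ht.1, h⟩
  · have hall : ∀ t : ℝ, μ (Ioo q t) = 0 := by
      intro t
      rw [not_bddAbove_iff] at hnb
      obtain ⟨x, hx, hxt⟩ := hnb t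
      exact measure_mono_null (Ioo_subset_Ioo_right hxt.le) hx.2.1
    have hIoi : μ (Ioi q) = 0 := by
      apply measure_mono_null (show Ioi q ⊆ ⋃ n : ℕ, Ioo q (q + n + 1) from ?_)
        (measure_iUnion_null fun n => hall _)
      intro z hz
      obtain ⟨n, hn⟩ := exists_nat_gt (z - q)
      exact mem_iUnion.2 ⟨n, hz, by linarith⟩
    exact measure_mono_null (fun t ht => ht.1) hIoi

lemma null_gap_left (μ : Measure ℝ) (q : ℝ) :
    μ {x | x < q ∧ μ (Ioo x q) = 0 ∧ μ {x} = 0} = 0 := by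
  set T := {x | x < q ∧ μ (Ioo x q) = 0 ∧ μ {x} = 0} with hT
  rcases T.eq_empty_or_nonempty with hE | hne
  · rw [hE]; exact measure_empty
  rcases em (BddBelow T) with hbdd | hnb
  · set s := sInf T with hs
    have habove : ∀ t, s < t → μ (Ioo t q) = 0 := by
      intro t ht
      obtain ⟨x, hx, hxt⟩ := exists_lt_of_csInf_lt hne ht
      exact measure_mono_null (Ioo_subset_Ioo_left hxt.le) hx.2.1
    have hIoo : μ (Ioo s q) = 0 := by
      apply measure_mono_null (show Ioo s q ⊆ ⋃ n : ℕ, Ioo (s + 1/(n+1)) q from ?_)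
        (measure_iUnion_null fun n => habove _ (lt_add_of_pos_right _ (by positivity)))
      intro z hz
      obtain ⟨n, hn⟩ := exists_nat_one_div_lt (show (0:ℝ) < z - s from sub_pos.2 hz.1)
      exact mem_iUnion.2 ⟨n, by linarith, hz.2⟩
    rcases em (s ∈ T) with hsT | hsT
    · apply measure_mono_null (show T ⊆ Ioo s q ∪ {s} from ?_)
      · exact le_antisymm ((measure_union_le _ _).trans
          (by rw [hsT.2.2, hIoo]; simp)) zero_le
      · intro t ht
        rcases eq_or_lt_of_le (csInf_le hbdd ht) with h | h
        · exact Or.inr (by simp [← h, hs])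
        · exact Or.inl ⟨h, ht.1⟩
    · apply measure_mono_null (show T ⊆ Ioo s q from ?_) hIoo
      intro t ht
      rcases eq_or_lt_of_le (csInf_le hbdd ht) with h | h
      · rw [← h] at ht; exact absurd ht hsT
      · exact ⟨h, ht.1⟩
  · have hall : ∀ t : ℝ, μ (Ioo t q) = 0 := by
      intro t
      rw [not_bddBelow_iff] at hnb
      obtain ⟨x, hx, hxt⟩ := hnb t
      exact measure_mono_null (Ioo_subset_Ioo_left hxt.le) hx.2.1
    have hIio : μ (Iio q) = 0 := by
      apply measure_mono_null (show Iio q ⊆ ⋃ n : ℕ, Ioo (q - n - 1) q from ?_)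
        (measure_iUnion_null fun n => hall _)
      intro z hz
      obtain ⟨n, hn⟩ := exists_nat_gt (q - z)
      exact mem_iUnion.2 ⟨n, by linarith, hz⟩
    exact measure_mono_null (fun t ht => ht.1) hIio

lemma gapset_right_null (μ : Measure ℝ) :
    μ {x | μ {x} = 0 ∧ ∃ t, t < x ∧ μ (Ioo t x) = 0} = 0 := by
  apply measure_mono_null (show _ ⊆ ⋃ q : ℚ,
    {x | (q:ℝ) < x ∧ μ (Ioo (q:ℝ) x) = 0 ∧ μ {x} = 0} from ?_)
    (measure_iUnion_null fun q => null_gap_right μ q)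
  rintro x ⟨hx0, t, htx, hnull⟩
  obtain ⟨q, hq1, hq2⟩ := exists_rat_btwn htx
  exact mem_iUnion.2 ⟨q, hq2, measure_mono_null (Ioo_subset_Ioo_left hq1.le) hnull, hx0⟩

lemma gapset_left_null (μ : Measure ℝ) :
    μ {x | μ {x} = 0 ∧ ∃ t, x < t ∧ μ (Ioo x t) = 0} = 0 := by
  apply measure_mono_null (show _ ⊆ ⋃ q : ℚ,
    {x | x < (q:ℝ) ∧ μ (Ioo x (q:ℝ)) = 0 ∧ μ {x} = 0} from ?_)
    (measure_iUnion_null fun q => null_gap_left μ q)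
  rintro x ⟨hx0, t, htx, hnull⟩
  obtain ⟨q, hq1, hq2⟩ := exists_rat_btwn htx
  exact mem_iUnion.2 ⟨q, hq1, measure_mono_null (Ioo_subset_Ioo_right hq2.le) hnull, hx0⟩

def rawV (μ : Measure ℝ) (x u : ℝ) : ℝ :=
  max 0 (min 1 (
    (Gtilde μ x u - (if 0 ≤ x then Function.rightLim (G μ) ((recip μ x u).toReal)
       else Function.leftLim (G μ) ((recip μ x u).toReal))) /
    (G μ ((recip μ x u).toReal) - (if 0 ≤ x then Function.rightLim (G μ) ((recip μ x u).toReal)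
       else Function.leftLim (G μ) ((recip μ x u).toReal)))))

lemma rawV_mem (μ : Measure ℝ) (x u : ℝ) : rawV μ x u ∈ Icc (0:ℝ) 1 :=
  ⟨le_max_left _ _, max_le zero_le_one (min_le_left _ _)⟩

lemma core_zero (hi : Integrable (fun z => z) μ) (u : ℝ) :
    recip μ 0 u = ((0:ℝ) : EReal) := by
  rw [recip, if_pos le_rfl, Gtilde_zero hi, xMinus_zero]
  norm_num

lemma core_pos (hi : Integrable (fun z => z) μ) (hmean : ∫ z, z ∂μ = 0) {x u : ℝ}
    (hx : 0 < x)
    (hcond : ((nup μ) {x} ≠ 0 ∧ 0 < u ∧ u < 1) ∨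
      ((nup μ) {x} = 0 ∧ (∀ t, 0 ≤ t → t < x → μ (Ioo t x) ≠ 0) ∧ μ (Ioi x) ≠ 0)) :
    ∃ y : ℝ, y < 0 ∧ recip μ x u = (y : EReal) ∧
      recip μ y (rawV μ x u) = (x : EReal) ∧
      ((nun μ) {y} = 0 → ∀ w : ℝ, recip μ y w = (x : EReal)) := by
  haveI := nup_fin hi
  haveI := nun_fin hi
  set h := Gtilde μ x u with hh
  set Pm := ((nup μ) (Ioo 0 x)).toReal with hPm
  set J := ((nup μ) {x}).toReal with hJ
  have hGt : h = Pm + J * u := Gtilde_pos hi hx u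
  have hPm0 : 0 ≤ Pm := ENNReal.toReal_nonneg
  have hJ0 : 0 ≤ J := ENNReal.toReal_nonneg
  have hsplit : ((nup μ) (Ioc 0 x)).toReal = Pm + J := meas_split_pos hi hx
  have hIocTot : ((nup μ) (Ioc 0 x)).toReal ≤ mTot μ := by
    rw [mTot_eq]
    exact ENNReal.toReal_mono (measure_ne_top _ _)
      (measure_mono (fun z hz => hz.1))
  -- the four key numeric facts
  have key : 0 < h ∧ h < mTot μ ∧ h ≤ ((nup μ) (Ioc 0 x)).toReal ∧
      (∀ t, 0 ≤ t → t < x → ((nup μ) (Ioc 0 t)).toReal < h) := by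
    rcases hcond with ⟨hJne, hu0, hu1⟩ | ⟨hJz, hC1, hC2⟩
    · have hJpos : 0 < J := ENNReal.toReal_pos hJne (measure_ne_top _ _)
      have hJu : 0 < J * u := mul_pos hJpos hu0
      have hJu1 : J * u < J := by nlinarith
      refine ⟨by linarith, ?_, by linarith, ?_⟩
      · have : h < Pm + J := by linarith
        linarith [hsplit ▸ hIocTot]
      · intro t ht0 htx
        have : ((nup μ) (Ioc 0 t)).toReal ≤ Pm :=
          ENNReal.toReal_mono (measure_ne_top _ _)
            (measure_mono (fun z hz => ⟨hz.1, lt_of_le_of_lt hz.2 htx⟩))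
        linarith
    · have hJz' : J = 0 := by rw [hJ, hJz]; simp
      have hhPm : h = Pm := by rw [hGt, hJz']; ring
      have hPmpos : 0 < Pm := by
        apply ENNReal.toReal_pos _ (measure_ne_top _ _)
        intro hc
        exact (hC1 0 le_rfl hx) ((nup_null_iff measurableSet_Ioo (fun z hz => hz.1)).1 hc)
      have hIoixpos : 0 < ((nup μ) (Ioi x)).toReal := by
        apply ENNReal.toReal_pos _ (measure_ne_top _ _)
        intro hc
        exact hC2 ((nup_null_iff measurableSet_Ioi
          (fun z hz => lt_trans hx hz)).1 hc)
      have hunion : ((nup μ) (Ioi 0)).toReal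
          = ((nup μ) (Ioc 0 x)).toReal + ((nup μ) (Ioi x)).toReal := by
        rw [← ENNReal.toReal_add (measure_ne_top _ _) (measure_ne_top _ _),
          ← measure_union (Ioc_disjoint_Ioi le_rfl) measurableSet_Ioi,
          Ioc_union_Ioi_eq_Ioi hx.le]
      refine ⟨by linarith, ?_, ?_, ?_⟩
      · rw [mTot_eq, hunion]
        linarith
      · rw [hsplit]; linarith
      · intro t ht0 htx
        have hdisj : Disjoint (Ioc (0:ℝ) t) (Ioo t x) := by
          apply Set.disjoint_left.2
          rintro z hz1 hz2
          exact absurd hz1.2 (not_le.2 hz2.1)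
        have hseteq : Ioo (0:ℝ) x = Ioc 0 t ∪ Ioo t x := by
          ext z
          simp only [mem_Ioo, mem_union, mem_Ioc]
          constructor
          · intro hz
            rcases le_or_gt z t with hzt | hzt
            · exact Or.inl ⟨hz.1, hzt⟩
            · exact Or.inr ⟨hzt, hz.2⟩
          · rintro (hz | hz)
            · exact ⟨hz.1, lt_of_le_of_lt hz.2 htx⟩
            · exact ⟨lt_of_le_of_lt ht0 hz.1, hz.2⟩
        have hsp : Pm = ((nup μ) (Ioc 0 t)).toReal + ((nup μ) (Ioo t x)).toReal := by
          rw [hPm, hseteq, measure_union hdisj measurableSet_Ioo,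
            ENNReal.toReal_add (measure_ne_top _ _) (measure_ne_top _ _)]
        have hpos : 0 < ((nup μ) (Ioo t x)).toReal := by
          apply ENNReal.toReal_pos _ (measure_ne_top _ _)
          intro hc
          exact (hC1 t ht0 htx) ((nup_null_iff measurableSet_Ioo
            (fun z hz => lt_of_le_of_lt ht0 hz.1)).1 hc)
        linarith
  obtain ⟨h1, h2, h4, h3⟩ := key
  obtain ⟨y, hy, hxm, hB, hA⟩ := xMinus_char hi hmean h1 h2
  have hrec : recip μ x u = (y : EReal) := by
    rw [recip, if_pos hx.le, ← hh, hxm]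
  have hrecToReal : (recip μ x u).toReal = y := by rw [hrec, EReal.toReal_coe]
  -- names for quantities at y
  set Ay := ((nun μ) (Ioo y 0)).toReal with hAy
  set By := ((nun μ) (Ico y 0)).toReal with hBy
  set Jy := ((nun μ) {y}).toReal with hJy
  have hsplity : By = Ay + Jy := meas_split_neg hi hy
  -- the return map
  have hret : ∀ w : ℝ, Gtilde μ y w = h → recip μ y w = (x : EReal) := by
    intro w hw
    rw [recip, if_neg (not_le.2 hy), hw]
    exact xPlus_eq hi hx h1 h4 h3
  have hGty : ∀ w : ℝ, Gtilde μ y w = Ay + Jy * w := fun w => Gtilde_neg hi hy w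
  refine ⟨y, hy, hrec, ?_, ?_⟩
  · -- rawV works
    apply hret
    rw [hGty]
    have hrawval : rawV μ x u = max 0 (min 1 ((h - Ay) / (By - Ay))) := by
      rw [rawV, if_pos hx.le, hrecToReal, rightLim_G_neg hi hy, G_neg hy, ← hh, ← hAy, ← hBy]
    rcases eq_or_lt_of_le (show (0:ℝ) ≤ Jy from ENNReal.toReal_nonneg) with hJyz | hJypos
    · have : h = Ay := le_antisymm (by rw [hsplity, ← hJyz] at hB; linarith) hA
      rw [← hJyz, this]; ring
    · have hden : By - Ay = Jy := by linarith
      have hnum0 : 0 ≤ (h - Ay) / (By - Ay) := by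
        apply div_nonneg (by linarith) (by linarith)
      have hnum1 : (h - Ay) / (By - Ay) ≤ 1 := by
        rw [div_le_one (by linarith)]
        rw [hsplity] at hB
        linarith
      rw [hrawval, min_eq_right hnum1, max_eq_right hnum0, hden,
        mul_div_cancel₀ _ (by linarith : Jy ≠ 0)]
      ring
  · -- non-atomic case: any w works
    intro hnn w
    apply hret
    rw [hGty]
    have hJyz : Jy = 0 := by rw [hJy, hnn]; simp
    have : h = Ay := le_antisymm (by rw [hsplity, hJyz] at hB; linarith) hA
    rw [hJyz, this]; ring

lemma core_neg (hi : Integrable (fun z => z) μ) (hmean : ∫ z, z ∂μ = 0) {x u : ℝ}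
    (hx : x < 0)
    (hcond : ((nun μ) {x} ≠ 0 ∧ 0 < u ∧ u < 1) ∨
      ((nun μ) {x} = 0 ∧ (∀ t, x < t → t ≤ 0 → μ (Ioo x t) ≠ 0) ∧ μ (Iio x) ≠ 0)) :
    ∃ y : ℝ, 0 < y ∧ recip μ x u = (y : EReal) ∧
      recip μ y (rawV μ x u) = (x : EReal) ∧
      ((nup μ) {y} = 0 → ∀ w : ℝ, recip μ y w = (x : EReal)) := by
  haveI := nup_fin hi
  haveI := nun_fin hi
  set h := Gtilde μ x u with hh
  set Pm := ((nun μ) (Ioo x 0)).toReal with hPm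
  set J := ((nun μ) {x}).toReal with hJ
  have hGt : h = Pm + J * u := Gtilde_neg hi hx u
  have hPm0 : 0 ≤ Pm := ENNReal.toReal_nonneg
  have hJ0 : 0 ≤ J := ENNReal.toReal_nonneg
  have hsplit : ((nun μ) (Ico x 0)).toReal = Pm + J := meas_split_neg hi hx
  have hmm : mTot μ = ((nun μ) (Iio 0)).toReal := mTot_eq' hi hmean
  have hIcoTot : ((nun μ) (Ico x 0)).toReal ≤ mTot μ := by
    rw [hmm]
    exact ENNReal.toReal_mono (measure_ne_top _ _) (measure_mono (fun z hz => hz.2))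
  have key : 0 < h ∧ h < mTot μ ∧ h ≤ ((nun μ) (Ico x 0)).toReal ∧
      (∀ t, x < t → t < 0 → ((nun μ) (Ico t 0)).toReal < h) := by
    rcases hcond with ⟨hJne, hu0, hu1⟩ | ⟨hJz, hC1, hC2⟩
    · have hJpos : 0 < J := ENNReal.toReal_pos hJne (measure_ne_top _ _)
      have hJu : 0 < J * u := mul_pos hJpos hu0
      have hJu1 : J * u < J := by nlinarith
      refine ⟨by linarith, ?_, by linarith, ?_⟩
      · have : h < Pm + J := by linarith
        linarith [hsplit ▸ hIcoTot]
      · intro t htx ht0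
        have : ((nun μ) (Ico t 0)).toReal ≤ Pm :=
          ENNReal.toReal_mono (measure_ne_top _ _)
            (measure_mono (fun z hz => ⟨lt_of_lt_of_le htx hz.1, hz.2⟩))
        linarith
    · have hJz' : J = 0 := by rw [hJ, hJz]; simp
      have hhPm : h = Pm := by rw [hGt, hJz']; ring
      have hPmpos : 0 < Pm := by
        apply ENNReal.toReal_pos _ (measure_ne_top _ _)
        intro hc
        exact (hC1 0 hx le_rfl) ((nun_null_iff measurableSet_Ioo (fun z hz => hz.2)).1 hc)
      have hIioxpos : 0 < ((nun μ) (Iio x)).toReal := by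
        apply ENNReal.toReal_pos _ (measure_ne_top _ _)
        intro hc
        exact hC2 ((nun_null_iff measurableSet_Iio
          (fun z hz => lt_trans hz hx)).1 hc)
      have hdisj0 : Disjoint (Ico x (0:ℝ)) (Iio x) := by
        apply Set.disjoint_left.2
        rintro z hz1 hz2
        exact absurd hz1.1 (not_le.2 (mem_Iio.1 hz2))
      have hseteq0 : Iio (0:ℝ) = Ico x 0 ∪ Iio x := by
        ext z
        simp only [mem_Iio, mem_union, mem_Ico]
        constructor
        · intro hz
          rcases lt_or_ge z x with hzx | hzx
          · exact Or.inr hzx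
          · exact Or.inl ⟨hzx, hz⟩
        · rintro (hz | hz)
          · exact hz.2
          · exact lt_trans hz hx
      have hunion : ((nun μ) (Iio 0)).toReal
          = ((nun μ) (Ico x 0)).toReal + ((nun μ) (Iio x)).toReal := by
        rw [hseteq0, measure_union hdisj0 measurableSet_Iio,
          ENNReal.toReal_add (measure_ne_top _ _) (measure_ne_top _ _)]
      refine ⟨by linarith, ?_, ?_, ?_⟩
      · rw [hmm, hunion]
        linarith
      · rw [hsplit]; linarith
      · intro t htx ht0
        have hdisj : Disjoint (Ico t (0:ℝ)) (Ioo x t) := by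
          apply Set.disjoint_left.2
          rintro z hz1 hz2
          exact absurd hz1.1 (not_le.2 hz2.2)
        have hseteq : Ioo x (0:ℝ) = Ico t 0 ∪ Ioo x t := by
          ext z
          simp only [mem_Ioo, mem_union, mem_Ico]
          constructor
          · intro hz
            rcases lt_or_ge z t with hzt | hzt
            · exact Or.inr ⟨hz.1, hzt⟩
            · exact Or.inl ⟨hzt, hz.2⟩
          · rintro (hz | hz)
            · exact ⟨lt_of_lt_of_le htx hz.1, hz.2⟩
            · exact ⟨hz.1, lt_trans hz.2 ht0⟩
        have hsp : Pm = ((nun μ) (Ico t 0)).toReal + ((nun μ) (Ioo x t)).toReal := by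
          rw [hPm, hseteq, measure_union hdisj measurableSet_Ioo,
            ENNReal.toReal_add (measure_ne_top _ _) (measure_ne_top _ _)]
        have hpos : 0 < ((nun μ) (Ioo x t)).toReal := by
          apply ENNReal.toReal_pos _ (measure_ne_top _ _)
          intro hc
          exact (hC1 t htx ht0.le) ((nun_null_iff measurableSet_Ioo
            (fun z hz => lt_trans hz.2 ht0)).1 hc)
        linarith
  obtain ⟨h1, h2, h4, h3⟩ := key
  obtain ⟨y, hy, hxp, hB, hA⟩ := xPlus_char hi h1 h2
  have hrec : recip μ x u = (y : EReal) := by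
    rw [recip, if_neg (not_le.2 hx), ← hh, hxp]
  have hrecToReal : (recip μ x u).toReal = y := by rw [hrec, EReal.toReal_coe]
  set Ay := ((nup μ) (Ioo 0 y)).toReal with hAy
  set By := ((nup μ) (Ioc 0 y)).toReal with hBy
  set Jy := ((nup μ) {y}).toReal with hJy
  have hsplity : By = Ay + Jy := meas_split_pos hi hy
  have hret : ∀ w : ℝ, Gtilde μ y w = h → recip μ y w = (x : EReal) := by
    intro w hw
    rw [recip, if_pos hy.le, hw]
    exact xMinus_eq hi hx h1 h4 h3
  have hGty : ∀ w : ℝ, Gtilde μ y w = Ay + Jy * w := fun w => Gtilde_pos hi hy w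
  refine ⟨y, hy, hrec, ?_, ?_⟩
  · apply hret
    rw [hGty]
    have hrawval : rawV μ x u = max 0 (min 1 ((h - Ay) / (By - Ay))) := by
      rw [rawV, if_neg (not_le.2 hx), hrecToReal, leftLim_G_pos hi hy, G_pos hy.le,
        ← hh, ← hAy, ← hBy]
    rcases eq_or_lt_of_le (show (0:ℝ) ≤ Jy from ENNReal.toReal_nonneg) with hJyz | hJypos
    · have : h = Ay := le_antisymm (by rw [hsplity, ← hJyz] at hB; linarith) hA
      rw [← hJyz, this]; ring
    · have hden : By - Ay = Jy := by linarith
      have hnum0 : 0 ≤ (h - Ay) / (By - Ay) := by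
        apply div_nonneg (by linarith) (by linarith)
      have hnum1 : (h - Ay) / (By - Ay) ≤ 1 := by
        rw [div_le_one (by linarith)]
        rw [hsplity] at hB
        linarith
      rw [hrawval, min_eq_right hnum1, max_eq_right hnum0, hden,
        mul_div_cancel₀ _ (by linarith : Jy ≠ 0)]
      ring
  · intro hnn w
    apply hret
    rw [hGty]
    have hJyz : Jy = 0 := by rw [hJy, hnn]; simp
    have : h = Ay := le_antisymm (by rw [hsplity, hJyz] at hB; linarith) hA
    rw [hJyz, this]; ring

lemma measurable_G (hi : Integrable (fun z => z) μ) : Measurable (G μ) := by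
  have h1 : Monotone (fun x : ℝ => ∫ z in Ioc (0:ℝ) x, z ∂μ) := by
    intro a b hab
    apply setIntegral_mono_set (hi.integrableOn)
      ((ae_restrict_iff' measurableSet_Ioc).2 (ae_of_all _ (fun z hz => hz.1.le)))
      ((Ioc_subset_Ioc_right hab).eventuallyLE)
  have h2 : Antitone (fun x : ℝ => ∫ z in Ico x (0:ℝ), -z ∂μ) := by
    intro a b hab
    apply setIntegral_mono_set (hi.neg.integrableOn)
      ((ae_restrict_iff' measurableSet_Ico).2 (ae_of_all _ (fun z hz => neg_nonneg.2 hz.2.le)))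
      ((Ico_subset_Ico_left hab).eventuallyLE)
  exact Measurable.ite measurableSet_Ici h1.measurable h2.measurable

lemma measurable_leftLim_G (hi : Integrable (fun z => z) μ) :
    Measurable (Function.leftLim (G μ)) := by
  haveI := nup_fin hi
  have heq : Function.leftLim (G μ) = fun t =>
      if 0 < t then ((nup μ) (Ioo 0 t)).toReal else G μ t := by
    funext t
    rcases lt_or_ge 0 t with h | h
    · rw [if_pos h, leftLim_G_pos hi h]
    · rw [if_neg (not_lt.2 h), leftLim_G_npos hi h]
  rw [heq]
  refine Measurable.ite measurableSet_Ioi ?_ (measurable_G hi)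
  have : Monotone (fun t : ℝ => ((nup μ) (Ioo 0 t)).toReal) := fun a b hab =>
    ENNReal.toReal_mono (measure_ne_top _ _) (measure_mono (Ioo_subset_Ioo_right hab))
  exact this.measurable

lemma measurable_rightLim_G (hi : Integrable (fun z => z) μ) :
    Measurable (Function.rightLim (G μ)) := by
  haveI := nun_fin hi
  have heq : Function.rightLim (G μ) = fun t =>
      if t < 0 then ((nun μ) (Ioo t 0)).toReal else G μ t := by
    funext t
    rcases lt_or_ge t 0 with h | h
    · rw [if_pos h, rightLim_G_neg hi h]
    · rw [if_neg (not_lt.2 h), rightLim_G_nonneg hi h]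
  rw [heq]
  refine Measurable.ite measurableSet_Iio ?_ (measurable_G hi)
  have : Antitone (fun t : ℝ => ((nun μ) (Ioo t 0)).toReal) := fun a b hab =>
    ENNReal.toReal_mono (measure_ne_top _ _) (measure_mono (Ioo_subset_Ioo_left hab))
  exact this.measurable

lemma measurable_Gtilde_pair (hi : Integrable (fun z => z) μ) :
    Measurable (fun p : ℝ × ℝ => Gtilde μ p.1 p.2) := by
  have heq : (fun p : ℝ × ℝ => Gtilde μ p.1 p.2) = fun p : ℝ × ℝ =>
      (if 0 ≤ p.1 then Function.leftLim (G μ) p.1 else Function.rightLim (G μ) p.1) +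
      (G μ p.1 - (if 0 ≤ p.1 then Function.leftLim (G μ) p.1
        else Function.rightLim (G μ) p.1)) * p.2 := by
    funext p
    rcases le_or_gt 0 p.1 with h | h
    · rw [Gtilde, if_pos h, if_pos h]
    · rw [Gtilde, if_neg (not_le.2 h), if_neg (not_le.2 h)]
  rw [heq]
  have hc : Measurable (fun x : ℝ => if 0 ≤ x then Function.leftLim (G μ) x
      else Function.rightLim (G μ) x) :=
    Measurable.ite measurableSet_Ici (measurable_leftLim_G hi) (measurable_rightLim_G hi)
  exact ((hc.comp measurable_fst).add
    ((((measurable_G hi).comp measurable_fst).sub (hc.comp measurable_fst)).mul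
      measurable_snd))

lemma antitone_xMinus : Antitone (fun h : ℝ => xMinus μ h) := by
  intro a b hab
  apply sSup_le_sSup
  intro s hs
  exact ⟨hs.1, le_trans hab hs.2⟩

lemma monotone_xPlus : Monotone (fun h : ℝ => xPlus μ h) := by
  intro a b hab
  apply sInf_le_sInf
  intro s hs
  exact ⟨hs.1, le_trans hab hs.2⟩

lemma measurable_recip_pair (hi : Integrable (fun z => z) μ) :
    Measurable (fun p : ℝ × ℝ => recip μ p.1 p.2) := by
  have hset : MeasurableSet {p : ℝ × ℝ | 0 ≤ p.1} :=
    measurable_fst measurableSet_Ici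
  exact Measurable.ite hset
    ((antitone_xMinus (μ := μ)).measurable.comp (measurable_Gtilde_pair hi))
    ((monotone_xPlus (μ := μ)).measurable.comp (measurable_Gtilde_pair hi))

lemma measurable_rawV_pair (hi : Integrable (fun z => z) μ) :
    Measurable (fun p : ℝ × ℝ => rawV μ p.1 p.2) := by
  have hy : Measurable (fun p : ℝ × ℝ => (recip μ p.1 p.2).toReal) :=
    measurable_ereal_toReal.comp (measurable_recip_pair hi)
  have hset : MeasurableSet {p : ℝ × ℝ | 0 ≤ p.1} :=
    measurable_fst measurableSet_Ici
  have hA : Measurable (fun p : ℝ × ℝ =>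
      if 0 ≤ p.1 then Function.rightLim (G μ) ((recip μ p.1 p.2).toReal)
      else Function.leftLim (G μ) ((recip μ p.1 p.2).toReal)) :=
    Measurable.ite hset ((measurable_rightLim_G hi).comp hy)
      ((measurable_leftLim_G hi).comp hy)
  have hB : Measurable (fun p : ℝ × ℝ => G μ ((recip μ p.1 p.2).toReal)) :=
    (measurable_G hi).comp hy
  have hGt : Measurable (fun p : ℝ × ℝ => Gtilde μ p.1 p.2) := measurable_Gtilde_pair hi
  exact measurable_const.max (measurable_const.min ((hGt.sub hA).div (hB.sub hA)))

def BadSet (μ : Measure ℝ) : Set ℝ :=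
  {x | μ {x} = 0 ∧ ∃ t, t < x ∧ μ (Ioo t x) = 0} ∪
  {x | μ {x} = 0 ∧ ∃ t, x < t ∧ μ (Ioo x t) = 0} ∪
  {x | μ (Ioi x) = 0 ∧ μ {x} = 0} ∪
  {x | μ (Iio x) = 0 ∧ μ {x} = 0}

lemma BadSet_null (μ : Measure ℝ) : μ (BadSet μ) = 0 := by
  rw [BadSet]
  exact measure_union_null (measure_union_null (measure_union_null
    (gapset_right_null μ) (gapset_left_null μ)) (null_tail_right μ)) (null_tail_left μ)

lemma goodx (hi : Integrable (fun z => z) μ) (hmean : ∫ z, z ∂μ = 0)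
    {x : ℝ} (hx : x ∉ BadSet μ) {u : ℝ} (hu0 : 0 < u) (hu1 : u < 1) :
    ∃ y : ℝ, recip μ x u = (y:EReal) ∧ recip μ y (rawV μ x u) = (x:EReal) := by
  have hx1 : ¬ (μ {x} = 0 ∧ ∃ t, t < x ∧ μ (Ioo t x) = 0) := fun hc =>
    hx (Or.inl (Or.inl (Or.inl hc)))
  have hx2 : ¬ (μ {x} = 0 ∧ ∃ t, x < t ∧ μ (Ioo x t) = 0) := fun hc =>
    hx (Or.inl (Or.inl (Or.inr hc)))
  have hx3 : ¬ (μ (Ioi x) = 0 ∧ μ {x} = 0) := fun hc => hx (Or.inl (Or.inr hc))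
  have hx4 : ¬ (μ (Iio x) = 0 ∧ μ {x} = 0) := fun hc => hx (Or.inr hc)
  rcases lt_trichotomy x 0 with hneg | hzero | hpos
  · have hcond : ((nun μ) {x} ≠ 0 ∧ 0 < u ∧ u < 1) ∨
        ((nun μ) {x} = 0 ∧ (∀ t, x < t → t ≤ 0 → μ (Ioo x t) ≠ 0) ∧ μ (Iio x) ≠ 0) := by
      by_cases hat : (nun μ) {x} = 0
      · right
        have hmx : μ {x} = 0 := (nun_null_iff (measurableSet_singleton x)
          (singleton_subset_iff.2 hneg)).1 hat
        refine ⟨hat, ?_, ?_⟩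
        · intro t hxt _ hc
          exact hx2 ⟨hmx, t, hxt, hc⟩
        · intro hc
          exact hx4 ⟨hc, hmx⟩
      · exact Or.inl ⟨hat, hu0, hu1⟩
    obtain ⟨y, _, hr1, hr2, _⟩ := core_neg hi hmean hneg hcond
    exact ⟨y, hr1, hr2⟩
  · subst hzero
    exact ⟨0, core_zero hi u, core_zero hi _⟩
  · have hcond : ((nup μ) {x} ≠ 0 ∧ 0 < u ∧ u < 1) ∨
        ((nup μ) {x} = 0 ∧ (∀ t, 0 ≤ t → t < x → μ (Ioo t x) ≠ 0) ∧ μ (Ioi x) ≠ 0) := by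
      by_cases hat : (nup μ) {x} = 0
      · right
        have hmx : μ {x} = 0 := (nup_null_iff (measurableSet_singleton x)
          (singleton_subset_iff.2 hpos)).1 hat
        refine ⟨hat, ?_, ?_⟩
        · intro t _ htx hc
          exact hx1 ⟨hmx, t, htx, hc⟩
        · intro hc
          exact hx3 ⟨hc, hmx⟩
      · exact Or.inl ⟨hat, hu0, hu1⟩
    obtain ⟨y, _, hr1, hr2, _⟩ := core_pos hi hmean hpos hcond
    exact ⟨y, hr1, hr2⟩

lemma goodx_na (hi : Integrable (fun z => z) μ) (hmean : ∫ z, z ∂μ = 0)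
    (hna : ∀ p : ℝ, μ {p} = 0) {x : ℝ} (hx : x ∉ BadSet μ) (u v : ℝ) :
    ∃ y : ℝ, recip μ x u = (y:EReal) ∧ recip μ y v = (x:EReal) := by
  have hx1 : ¬ (μ {x} = 0 ∧ ∃ t, t < x ∧ μ (Ioo t x) = 0) := fun hc =>
    hx (Or.inl (Or.inl (Or.inl hc)))
  have hx2 : ¬ (μ {x} = 0 ∧ ∃ t, x < t ∧ μ (Ioo x t) = 0) := fun hc =>
    hx (Or.inl (Or.inl (Or.inr hc)))
  have hx3 : ¬ (μ (Ioi x) = 0 ∧ μ {x} = 0) := fun hc => hx (Or.inl (Or.inr hc))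
  have hx4 : ¬ (μ (Iio x) = 0 ∧ μ {x} = 0) := fun hc => hx (Or.inr hc)
  rcases lt_trichotomy x 0 with hneg | hzero | hpos
  · have hcond : ((nun μ) {x} ≠ 0 ∧ 0 < u ∧ u < 1) ∨
        ((nun μ) {x} = 0 ∧ (∀ t, x < t → t ≤ 0 → μ (Ioo x t) ≠ 0) ∧ μ (Iio x) ≠ 0) := by
      right
      refine ⟨(withDensity_absolutelyContinuous μ _) (hna x), ?_, ?_⟩
      · intro t hxt _ hc
        exact hx2 ⟨hna x, t, hxt, hc⟩
      · intro hc
        exact hx4 ⟨hc, hna x⟩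
    obtain ⟨y, _, hr1, _, hall⟩ := core_neg hi hmean hneg hcond
    exact ⟨y, hr1, hall ((withDensity_absolutelyContinuous μ _) (hna y)) v⟩
  · subst hzero
    exact ⟨0, core_zero hi u, core_zero hi v⟩
  · have hcond : ((nup μ) {x} ≠ 0 ∧ 0 < u ∧ u < 1) ∨
        ((nup μ) {x} = 0 ∧ (∀ t, 0 ≤ t → t < x → μ (Ioo t x) ≠ 0) ∧ μ (Ioi x) ≠ 0) := by
      right
      refine ⟨(withDensity_absolutelyContinuous μ _) (hna x), ?_, ?_⟩
      · intro t _ htx hc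
        exact hx1 ⟨hna x, t, htx, hc⟩
      · intro hc
        exact hx3 ⟨hc, hna x⟩
    obtain ⟨y, _, hr1, _, hall⟩ := core_pos hi hmean hpos hcond
    exact ⟨y, hr1, hall ((withDensity_absolutelyContinuous μ _) (hna y)) v⟩

end RR

open RR

/-- There exists a `[0,1]`-valued random variable `V` (possibly depending on `(X,U)`)
with `r(r(X,U), V) = X` a.s.; in particular, if the distribution of `X` is non-atomic,
then `r(r(X)) = X` a.s. -/
theorem recip_recip_ae_eq
    {Ω : Type*} [MeasurableSpace Ω] (P : Measure Ω) [IsProbabilityMeasure P]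
    (X U : Ω → ℝ) (hX : Measurable X) (hU : Measurable U)
    (hindep : IndepFun X U P)
    (hUunif : Measure.map U P = volume.restrict (Set.Icc (0:ℝ) 1))
    (hint : Integrable X P) (hmean : ∫ ω, X ω ∂P = 0) :
    (∃ V : Ω → ℝ, Measurable V ∧ (∀ ω, V ω ∈ Set.Icc (0:ℝ) 1) ∧
      ∀ᵐ ω ∂P, ∃ y : ℝ,
        recip (Measure.map X P) (X ω) (U ω) = (y : EReal) ∧
        recip (Measure.map X P) y (V ω) = ((X ω : ℝ) : EReal)) ∧
    ((∀ x : ℝ, Measure.map X P {x} = 0) →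
      ∀ u v : ℝ, u ∈ Set.Icc (0:ℝ) 1 → v ∈ Set.Icc (0:ℝ) 1 →
        ∀ᵐ ω ∂P, ∃ y : ℝ,
          recip (Measure.map X P) (X ω) u = (y : EReal) ∧
          recip (Measure.map X P) y v = ((X ω : ℝ) : EReal)) := by
  have hiμ : Integrable (fun z => z) (Measure.map X P) :=
    (integrable_map_measure measurable_id.aestronglyMeasurable hX.aemeasurable).2 hint
  have hmeanμ : ∫ z, z ∂(Measure.map X P) = 0 := by
    exact (integral_map hX.aemeasurable aestronglyMeasurable_id).trans hmean
  set μ := Measure.map X P with hμdef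
  haveI : IsProbabilityMeasure μ := Measure.isProbabilityMeasure_map hX.aemeasurable
  set lam := volume.restrict (Icc (0:ℝ) 1) with hlam
  haveI : IsFiniteMeasure lam := by
    constructor
    rw [hlam, Measure.restrict_apply_univ, Real.volume_Icc]
    exact ENNReal.ofReal_lt_top
  set N := toMeasurable μ (BadSet μ) with hN
  have hNmeas : MeasurableSet N := measurableSet_toMeasurable _ _
  have hNnull : μ N = 0 := by rw [hN, measure_toMeasurable]; exact BadSet_null μ
  constructor
  · -- part 1
    have hmap : Measure.map (fun ω => (X ω, U ω)) P = μ.prod lam := by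
      rw [← hUunif, hμdef]
      exact (indepFun_iff_map_prod_eq_prod_map_map hX.aemeasurable hU.aemeasurable).1 hindep
    have hKmeas : MeasurableSet (Iic (0:ℝ) ∪ Ici 1) := measurableSet_Iic.union measurableSet_Ici
    have hKnull : lam (Iic 0 ∪ Ici 1) = 0 := by
      apply measure_union_null
      · rw [hlam, Measure.restrict_apply measurableSet_Iic]
        have : Iic (0:ℝ) ∩ Icc 0 1 = {0} := by
          ext z
          simp only [mem_inter_iff, mem_Iic, mem_Icc, mem_singleton_iff]
          constructor
          · rintro ⟨h1, h2, _⟩; exact le_antisymm h1 h2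
          · rintro rfl; norm_num
        rw [this, Real.volume_singleton]
      · rw [hlam, Measure.restrict_apply measurableSet_Ici]
        have : Ici (1:ℝ) ∩ Icc 0 1 = {1} := by
          ext z
          simp only [mem_inter_iff, mem_Ici, mem_Icc, mem_singleton_iff]
          constructor
          · rintro ⟨h1, _, h2⟩; exact le_antisymm h2 h1
          · rintro rfl; norm_num
        rw [this, Real.volume_singleton]
    set S := (N ×ˢ (univ : Set ℝ)) ∪ ((univ : Set ℝ) ×ˢ (Iic (0:ℝ) ∪ Ici 1)) with hS
    have hSmeas : MeasurableSet S :=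
      (hNmeas.prod MeasurableSet.univ).union (MeasurableSet.univ.prod hKmeas)
    have hSnull : (μ.prod lam) S = 0 := by
      apply measure_union_null
      · rw [Measure.prod_prod, hNnull, zero_mul]
      · rw [Measure.prod_prod, hKnull, mul_zero]
    have hpre : P ((fun ω => (X ω, U ω)) ⁻¹' S) = 0 := by
      rw [← Measure.map_apply (hX.prodMk hU) hSmeas, hmap, hSnull]
    have hae : ∀ᵐ ω ∂P, (X ω, U ω) ∉ S := by
      rw [ae_iff]
      simp only [not_not]
      exact hpre
    refine ⟨fun ω => rawV μ (X ω) (U ω),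
      (measurable_rawV_pair hiμ).comp (hX.prodMk hU),
      fun ω => rawV_mem μ _ _, ?_⟩
    filter_upwards [hae] with ω hω
    have hXn : X ω ∉ BadSet μ := fun hc =>
      hω (Or.inl (Set.mem_prod.2 ⟨subset_toMeasurable μ _ hc, mem_univ _⟩))
    have hUn : U ω ∉ Iic (0:ℝ) ∪ Ici 1 := fun hc =>
      hω (Or.inr (Set.mem_prod.2 ⟨mem_univ _, hc⟩))
    have hu0 : 0 < U ω := by
      by_contra hc
      exact hUn (Or.inl (not_lt.1 hc))
    have hu1 : U ω < 1 := by
      by_contra hc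
      exact hUn (Or.inr (not_lt.1 hc))
    exact goodx hiμ hmeanμ hXn hu0 hu1
  · -- part 2
    intro hna u v _ _
    have hpre2 : P (X ⁻¹' N) = 0 := by
      rw [← Measure.map_apply hX hNmeas]
      exact hNnull
    have hae2 : ∀ᵐ ω ∂P, X ω ∉ N := by
      rw [ae_iff]
      simp only [not_not]
      exact hpre2
    filter_upwards [hae2] with ω hω
    exact goodx_na hiμ hmeanμ hna (fun hc => hω (subset_toMeasurable μ _ hc)) u v
end
end
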